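/- arXiv:1803.01615 — 2 statements merged into one kernel-verified Lean document; each statement's English description precedes it below -/
import Mathlib

section
/- Parallel Hopf field forces containment in a great S⁴ (used in proof of Proposition 3.4): let f : ℂ → S^n be a conformal minimal immersion. If there exists a smooth function μ : ℂ → ℂ such that N_z Ω = μ Ω at every point of ℂ, then the image f(ℂ) is contained in a real linear subspace of ℝ^{n+1} of dimension at most 5 (so f lies in a great S⁴ ⊂ S^n). -/
open Complex

noncomputable section

/-- Wirtinger derivative `∂_z` of a map `ℂ → ℂ`. -/
def wirtZ (g : ℂ → ℂ) (z : ℂ) : ℂ :=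
  (1 / 2 : ℂ) * (fderiv ℝ g z 1 - Complex.I * fderiv ℝ g z Complex.I)

/-- Wirtinger derivative `∂_z̄` of a map `ℂ → ℂ`. -/
def wirtZbar (g : ℂ → ℂ) (z : ℂ) : ℂ :=
  (1 / 2 : ℂ) * (fderiv ℝ g z 1 + Complex.I * fderiv ℝ g z Complex.I)

/-- Componentwise `∂_z` for vector-valued maps. -/
def WZ {m : ℕ} (g : ℂ → Fin m → ℂ) : ℂ → Fin m → ℂ :=
  fun z i => wirtZ (fun w => g w i) z

/-- Componentwise `∂_z̄` for vector-valued maps. -/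
def WZb {m : ℕ} (g : ℂ → Fin m → ℂ) : ℂ → Fin m → ℂ :=
  fun z i => wirtZbar (fun w => g w i) z

/-- Complex-bilinear (non-conjugating) pairing. -/
def pairC {m : ℕ} (u v : Fin m → ℂ) : ℂ := ∑ i, u i * v i

/-- Componentwise complex conjugation. -/
def conjV {m : ℕ} (u : Fin m → ℂ) : Fin m → ℂ := fun i => (starRingEnd ℂ) (u i)

/-- Complexification of a real vector. -/
def cV {m : ℕ} (u : Fin m → ℝ) : Fin m → ℂ := fun i => (u i : ℂ)

/-- Complexification of a real-vector-valued map. -/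
def Fc {m : ℕ} (f : ℂ → Fin m → ℝ) : ℂ → Fin m → ℂ := fun z => cV (f z)

/-- `∂_z` of (the complexification of) a real-valued function. -/
def dZ (ρ : ℂ → ℝ) (z : ℂ) : ℂ := wirtZ (fun w => ((ρ w : ℝ) : ℂ)) z

/-- `f : ℂ → S^n ⊂ ℝ^{n+1}` is a conformal minimal immersion with conformal factor `ρ`:
`⟨f_z, f_z⟩ = 0`, `⟨f_z, f̄_z⟩ = (1/2) e^{2ρ}`, and `f_{z z̄} = −(1/2) e^{2ρ} f`. -/
def IsConfMinImm {m : ℕ} (f : ℂ → Fin m → ℝ) (ρ : ℂ → ℝ) : Prop :=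
  ContDiff ℝ (⊤ : ℕ∞) f ∧ ContDiff ℝ (⊤ : ℕ∞) ρ ∧
  (∀ z, ∑ i, (f z i) ^ 2 = 1) ∧
  (∀ z, pairC (WZ (Fc f) z) (WZ (Fc f) z) = 0) ∧
  (∀ z, pairC (WZ (Fc f) z) (conjV (WZ (Fc f) z)) = (1 / 2 : ℂ) * (Real.exp (2 * ρ z) : ℂ)) ∧
  (∀ z i, WZb (WZ (Fc f)) z i = -(1 / 2 : ℂ) * (Real.exp (2 * ρ z) : ℂ) * Fc f z i)

/-- The Hopf field `Ω = f_{zz} − 2 ρ_z f_z`. -/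
def Hopf {m : ℕ} (f : ℂ → Fin m → ℝ) (ρ : ℂ → ℝ) : ℂ → Fin m → ℂ :=
  fun z i => WZ (WZ (Fc f)) z i - 2 * dZ ρ z * WZ (Fc f) z i

/-- Real part `Ω₁` of the Hopf field, viewed in `ℂ^{n+1}`. -/
def HopfRe {m : ℕ} (f : ℂ → Fin m → ℝ) (ρ : ℂ → ℝ) : ℂ → Fin m → ℂ :=
  fun z i => ((Hopf f ρ z i).re : ℂ)

/-- Imaginary part `Ω₂` of the Hopf field, viewed in `ℂ^{n+1}`. -/
def HopfIm {m : ℕ} (f : ℂ → Fin m → ℝ) (ρ : ℂ → ℝ) : ℂ → Fin m → ℂ :=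
  fun z i => ((Hopf f ρ z i).im : ℂ)

/-- Normal projection `E^⊥` of a constant vector `E ∈ ℝ^{n+1}`. -/
def Eperp {m : ℕ} (f : ℂ → Fin m → ℝ) (ρ : ℂ → ℝ) (E : Fin m → ℝ) : ℂ → Fin m → ℂ :=
  fun z i => (E i : ℂ) - pairC (cV E) (Fc f z) * Fc f z i
    - 2 * (Real.exp (-2 * ρ z) : ℂ) * pairC (cV E) (WZ (Fc f) z) * WZb (Fc f) z i
    - 2 * (Real.exp (-2 * ρ z) : ℂ) * pairC (cV E) (WZb (Fc f) z) * WZ (Fc f) z i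

/-- `ψ` is a normal field along `f`. -/
def IsNormalField {m : ℕ} (f : ℂ → Fin m → ℝ) (ψ : ℂ → Fin m → ℂ) : Prop :=
  ∀ z, pairC (ψ z) (Fc f z) = 0 ∧ pairC (ψ z) (WZ (Fc f) z) = 0 ∧
    pairC (ψ z) (WZb (Fc f) z) = 0

/-- Normal covariant derivative `N_z ψ = ψ_z + 2 e^{−2ρ} ⟨ψ, Ω⟩ f_z̄`. -/
def NZ {m : ℕ} (f : ℂ → Fin m → ℝ) (ρ : ℂ → ℝ) (ψ : ℂ → Fin m → ℂ) : ℂ → Fin m → ℂ :=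
  fun z i => WZ ψ z i
    + 2 * (Real.exp (-2 * ρ z) : ℂ) * pairC (ψ z) (Hopf f ρ z) * WZb (Fc f) z i

/-- Normal covariant derivative `N_z̄ ψ = ψ_z̄ + 2 e^{−2ρ} ⟨ψ, Ω̄⟩ f_z`. -/
def NZb {m : ℕ} (f : ℂ → Fin m → ℝ) (ρ : ℂ → ℝ) (ψ : ℂ → Fin m → ℂ) : ℂ → Fin m → ℂ :=
  fun z i => WZb ψ z i
    + 2 * (Real.exp (-2 * ρ z) : ℂ) * pairC (ψ z) (conjV (Hopf f ρ z)) * WZ (Fc f) z i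

/-- Normal Laplacian `Δ^⊥ ψ = 2 e^{−2ρ} (N_z̄ (N_z ψ) + N_z (N_z̄ ψ))`. -/
def LapPerp {m : ℕ} (f : ℂ → Fin m → ℝ) (ρ : ℂ → ℝ) (ψ : ℂ → Fin m → ℂ) : ℂ → Fin m → ℂ :=
  fun z i => 2 * (Real.exp (-2 * ρ z) : ℂ) * (NZb f ρ (NZ f ρ ψ) z i + NZ f ρ (NZb f ρ ψ) z i)

/-- Jacobi operator `𝓛 ψ = Δ^⊥ ψ + 2 ψ + 4 e^{−4ρ} (⟨ψ, Ω⟩ Ω̄ + ⟨ψ, Ω̄⟩ Ω)`. -/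
def Jacobi {m : ℕ} (f : ℂ → Fin m → ℝ) (ρ : ℂ → ℝ) (ψ : ℂ → Fin m → ℂ) : ℂ → Fin m → ℂ :=
  fun z i => LapPerp f ρ ψ z i + 2 * ψ z i
    + 4 * (Real.exp (-4 * ρ z) : ℂ) *
      (pairC (ψ z) (Hopf f ρ z) * conjV (Hopf f ρ z) i
        + pairC (ψ z) (conjV (Hopf f ρ z)) * Hopf f ρ z i)

/-- The S⁴ adapted frame setup: `⟨Ω, Ω⟩ ≡ 1`, `Ω₁ = cosh θ · ψ₃`, `Ω₂ = sinh θ · ψ₄`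
with `ψ₃, ψ₄` orthonormal normal fields. -/
def S4Frame (f : ℂ → Fin 5 → ℝ) (ρ : ℂ → ℝ) (ψ₃ ψ₄ : ℂ → Fin 5 → ℝ) (θ : ℂ → ℝ) : Prop :=
  ContDiff ℝ (⊤ : ℕ∞) ψ₃ ∧ ContDiff ℝ (⊤ : ℕ∞) ψ₄ ∧ ContDiff ℝ (⊤ : ℕ∞) θ ∧
  IsNormalField f (Fc ψ₃) ∧ IsNormalField f (Fc ψ₄) ∧
  (∀ z, ∑ i, (ψ₃ z i) ^ 2 = 1) ∧ (∀ z, ∑ i, (ψ₄ z i) ^ 2 = 1) ∧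
  (∀ z, ∑ i, ψ₃ z i * ψ₄ z i = 0) ∧
  (∀ z, pairC (Hopf f ρ z) (Hopf f ρ z) = 1) ∧
  (∀ z i, (Hopf f ρ z i).re = Real.cosh (θ z) * ψ₃ z i) ∧
  (∀ z i, (Hopf f ρ z i).im = Real.sinh (θ z) * ψ₄ z i)

namespace WirtAux

lemma clm_decomp (L : ℂ →L[ℝ] ℂ) (w : ℂ) :
    L w = (1/2 : ℂ) * (L 1 - Complex.I * L Complex.I) * w
      + (1/2 : ℂ) * (L 1 + Complex.I * L Complex.I) * (starRingEnd ℂ) w := by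
  have hw : w = w.re • (1 : ℂ) + w.im • Complex.I := by
    simp [Complex.real_smul, Complex.re_add_im, Complex.mk_eq_add_mul_I]
  rw [hw, map_add, map_smul, map_smul]
  simp only [Complex.real_smul, map_add, map_mul, Complex.conj_ofReal, Complex.conj_I, map_one]
  ring_nf
  rw [Complex.I_sq]
  ring

lemma fderiv_eq_wirt (g : ℂ → ℂ) (z w : ℂ) :
    fderiv ℝ g z w = wirtZ g z * w + wirtZbar g z * (starRingEnd ℂ) w := by
  simpa [wirtZ, wirtZbar] using clm_decomp (fderiv ℝ g z) w

lemma wirtZ_add {u v : ℂ → ℂ} {z : ℂ} (hu : DifferentiableAt ℝ u z)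
    (hv : DifferentiableAt ℝ v z) :
    wirtZ (fun w => u w + v w) z = wirtZ u z + wirtZ v z := by
  simp [wirtZ, fderiv_fun_add hu hv]; ring

lemma wirtZbar_add {u v : ℂ → ℂ} {z : ℂ} (hu : DifferentiableAt ℝ u z)
    (hv : DifferentiableAt ℝ v z) :
    wirtZbar (fun w => u w + v w) z = wirtZbar u z + wirtZbar v z := by
  simp [wirtZbar, fderiv_fun_add hu hv]; ring

lemma wirtZ_sub {u v : ℂ → ℂ} {z : ℂ} (hu : DifferentiableAt ℝ u z)
    (hv : DifferentiableAt ℝ v z) :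
    wirtZ (fun w => u w - v w) z = wirtZ u z - wirtZ v z := by
  simp [wirtZ, fderiv_fun_sub hu hv]; ring

lemma wirtZbar_sub {u v : ℂ → ℂ} {z : ℂ} (hu : DifferentiableAt ℝ u z)
    (hv : DifferentiableAt ℝ v z) :
    wirtZbar (fun w => u w - v w) z = wirtZbar u z - wirtZbar v z := by
  simp [wirtZbar, fderiv_fun_sub hu hv]; ring

lemma wirtZ_mul {u v : ℂ → ℂ} {z : ℂ} (hu : DifferentiableAt ℝ u z)
    (hv : DifferentiableAt ℝ v z) :
    wirtZ (fun w => u w * v w) z = wirtZ u z * v z + u z * wirtZ v z := by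
  simp [wirtZ, fderiv_fun_mul hu hv, smul_eq_mul]; ring

lemma wirtZbar_mul {u v : ℂ → ℂ} {z : ℂ} (hu : DifferentiableAt ℝ u z)
    (hv : DifferentiableAt ℝ v z) :
    wirtZbar (fun w => u w * v w) z = wirtZbar u z * v z + u z * wirtZbar v z := by
  simp [wirtZbar, fderiv_fun_mul hu hv, smul_eq_mul]; ring

lemma wirtZ_const_mul {v : ℂ → ℂ} {z : ℂ} (c : ℂ) (hv : DifferentiableAt ℝ v z) :
    wirtZ (fun w => c * v w) z = c * wirtZ v z := by
  simp [wirtZ, fderiv_const_mul hv c, smul_eq_mul]; ring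

lemma wirtZbar_const_mul {v : ℂ → ℂ} {z : ℂ} (c : ℂ) (hv : DifferentiableAt ℝ v z) :
    wirtZbar (fun w => c * v w) z = c * wirtZbar v z := by
  simp [wirtZbar, fderiv_const_mul hv c, smul_eq_mul]; ring

lemma wirtZ_sum {ι : Type*} (s : Finset ι) {F : ι → ℂ → ℂ} {z : ℂ}
    (h : ∀ i ∈ s, DifferentiableAt ℝ (F i) z) :
    wirtZ (fun w => ∑ i ∈ s, F i w) z = ∑ i ∈ s, wirtZ (F i) z := by
  simp only [wirtZ, fderiv_fun_sum h, ContinuousLinearMap.sum_apply]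
  rw [Finset.mul_sum, ← Finset.sum_sub_distrib, Finset.mul_sum]

lemma wirtZbar_sum {ι : Type*} (s : Finset ι) {F : ι → ℂ → ℂ} {z : ℂ}
    (h : ∀ i ∈ s, DifferentiableAt ℝ (F i) z) :
    wirtZbar (fun w => ∑ i ∈ s, F i w) z = ∑ i ∈ s, wirtZbar (F i) z := by
  simp only [wirtZbar, fderiv_fun_sum h, ContinuousLinearMap.sum_apply]
  rw [Finset.mul_sum, ← Finset.sum_add_distrib, Finset.mul_sum]

lemma wirtZ_conj {g : ℂ → ℂ} {z : ℂ} (hg : DifferentiableAt ℝ g z) :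
    wirtZ (fun w => (starRingEnd ℂ) (g w)) z = (starRingEnd ℂ) (wirtZbar g z) := by
  have h : fderiv ℝ (fun w => (starRingEnd ℂ) (g w)) z
      = (Complex.conjCLE.toContinuousLinearMap).comp (fderiv ℝ g z) :=
    (Complex.conjCLE.toContinuousLinearMap.hasFDerivAt.comp z hg.hasFDerivAt).fderiv
  simp [wirtZ, wirtZbar, h, Complex.conjCLE_apply, map_mul, map_sub, map_add, map_div₀,
    map_one, map_ofNat, Complex.conj_I]
  ring

lemma wirtZbar_conj {g : ℂ → ℂ} {z : ℂ} (hg : DifferentiableAt ℝ g z) :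
    wirtZbar (fun w => (starRingEnd ℂ) (g w)) z = (starRingEnd ℂ) (wirtZ g z) := by
  have h : fderiv ℝ (fun w => (starRingEnd ℂ) (g w)) z
      = (Complex.conjCLE.toContinuousLinearMap).comp (fderiv ℝ g z) :=
    (Complex.conjCLE.toContinuousLinearMap.hasFDerivAt.comp z hg.hasFDerivAt).fderiv
  simp [wirtZ, wirtZbar, h, Complex.conjCLE_apply, map_mul, map_sub, map_add, map_div₀,
    map_one, map_ofNat, Complex.conj_I]

lemma wirtZ_smooth {g : ℂ → ℂ} (hg : ContDiff ℝ (⊤ : ℕ∞) g) : ContDiff ℝ (⊤ : ℕ∞) (wirtZ g) := by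
  have h1 : ContDiff ℝ (⊤ : ℕ∞) (fderiv ℝ g) := hg.fderiv_right (by simp)
  unfold wirtZ
  exact contDiff_const.mul ((h1.clm_apply contDiff_const).sub
    (contDiff_const.mul (h1.clm_apply contDiff_const)))

lemma wirtZbar_smooth {g : ℂ → ℂ} (hg : ContDiff ℝ (⊤ : ℕ∞) g) : ContDiff ℝ (⊤ : ℕ∞) (wirtZbar g) := by
  have h1 : ContDiff ℝ (⊤ : ℕ∞) (fderiv ℝ g) := hg.fderiv_right (by simp)
  unfold wirtZbar
  exact contDiff_const.mul ((h1.clm_apply contDiff_const).add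
    (contDiff_const.mul (h1.clm_apply contDiff_const)))

lemma diffAt {g : ℂ → ℂ} (hg : ContDiff ℝ (⊤ : ℕ∞) g) (z : ℂ) : DifferentiableAt ℝ g z :=
  (hg.differentiable (by simp)) z

lemma wirt_symm {g : ℂ → ℂ} (hg : ContDiff ℝ (⊤ : ℕ∞) g) (z : ℂ) :
    wirtZbar (wirtZ g) z = wirtZ (wirtZbar g) z := by
  have hdiff : ∀ y, DifferentiableAt ℝ g y := fun y => (hg.differentiable (by simp)) y
  have hf' : ContDiff ℝ (⊤ : ℕ∞) (fderiv ℝ g) := hg.fderiv_right (by simp)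
  have hx : HasFDerivAt (fderiv ℝ g) (fderiv ℝ (fderiv ℝ g) z) z :=
    ((hf'.differentiable (by simp)) z).hasFDerivAt
  have hsymm : ∀ v w : ℂ, fderiv ℝ (fderiv ℝ g) z v w = fderiv ℝ (fderiv ℝ g) z w v :=
    second_derivative_symmetric (fun y => (hdiff y).hasFDerivAt) hx
  have hA : ∀ v : ℂ, DifferentiableAt ℝ (fun w => fderiv ℝ g w v) z := fun v =>
    ((hf'.differentiable (by simp)) z).clm_apply (differentiableAt_const v)
  have hDA : ∀ v u : ℂ, fderiv ℝ (fun w => fderiv ℝ g w v) z u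
      = fderiv ℝ (fderiv ℝ g) z u v := by
    intro v u
    have : HasFDerivAt (fun w => fderiv ℝ g w v)
        ((ContinuousLinearMap.apply ℝ ℂ v).comp (fderiv ℝ (fderiv ℝ g) z)) z :=
      (ContinuousLinearMap.apply ℝ ℂ v).hasFDerivAt.comp z hx
    rw [this.fderiv]; rfl
  have e1 : wirtZbar (wirtZ g) z = (1/2:ℂ) * ((1/2:ℂ) *
        (fderiv ℝ (fun w => fderiv ℝ g w 1) z 1 - Complex.I * fderiv ℝ (fun w => fderiv ℝ g w I) z 1)
      + Complex.I * ((1/2:ℂ) *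
        (fderiv ℝ (fun w => fderiv ℝ g w 1) z I - Complex.I * fderiv ℝ (fun w => fderiv ℝ g w I) z I))) := by
    unfold wirtZbar wirtZ
    congr 1
    have hd : fderiv ℝ (fun w => (1/2:ℂ) * (fderiv ℝ g w 1 - Complex.I * fderiv ℝ g w Complex.I)) z
        = ((1/2:ℂ) • ((fderiv ℝ (fun w => fderiv ℝ g w 1) z) - (Complex.I • (fderiv ℝ (fun w => fderiv ℝ g w I) z)))) := by
      rw [fderiv_const_mul (((hA 1).fun_sub ((hA I).const_mul I))), fderiv_fun_sub (hA 1) ((hA I).const_mul I),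
        fderiv_const_mul (hA I)]
    rw [hd]; simp only [ContinuousLinearMap.smul_apply, ContinuousLinearMap.sub_apply, ContinuousLinearMap.add_apply, smul_eq_mul]
  have e2 : wirtZ (wirtZbar g) z = (1/2:ℂ) * ((1/2:ℂ) *
        (fderiv ℝ (fun w => fderiv ℝ g w 1) z 1 + Complex.I * fderiv ℝ (fun w => fderiv ℝ g w I) z 1)
      - Complex.I * ((1/2:ℂ) *
        (fderiv ℝ (fun w => fderiv ℝ g w 1) z I + Complex.I * fderiv ℝ (fun w => fderiv ℝ g w I) z I))) := by
    unfold wirtZbar wirtZ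
    congr 1
    have hd : fderiv ℝ (fun w => (1/2:ℂ) * (fderiv ℝ g w 1 + Complex.I * fderiv ℝ g w Complex.I)) z
        = ((1/2:ℂ) • ((fderiv ℝ (fun w => fderiv ℝ g w 1) z) + (Complex.I • (fderiv ℝ (fun w => fderiv ℝ g w I) z)))) := by
      rw [fderiv_const_mul (((hA 1).fun_add ((hA I).const_mul I))), fderiv_fun_add (hA 1) ((hA I).const_mul I),
        fderiv_const_mul (hA I)]
    rw [hd]; simp only [ContinuousLinearMap.smul_apply, ContinuousLinearMap.sub_apply, ContinuousLinearMap.add_apply, smul_eq_mul]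
  rw [e1, e2, hDA 1 1, hDA I 1, hDA 1 I, hDA I I, hsymm 1 I]
  ring

lemma fderiv_ofReal_comp {u : ℂ → ℝ} {z : ℂ} (hu : DifferentiableAt ℝ u z) :
    fderiv ℝ (fun w => ((u w : ℝ) : ℂ)) z = Complex.ofRealCLM.comp (fderiv ℝ u z) :=
  (Complex.ofRealCLM.hasFDerivAt.comp z hu.hasFDerivAt).fderiv

lemma wirtZbar_ofReal {u : ℂ → ℝ} {z : ℂ} (hu : DifferentiableAt ℝ u z) :
    wirtZbar (fun w => ((u w : ℝ) : ℂ)) z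
      = (starRingEnd ℂ) (wirtZ (fun w => ((u w : ℝ) : ℂ)) z) := by
  simp [wirtZ, wirtZbar, fderiv_ofReal_comp hu, map_mul, map_sub, map_add, map_div₀,
    map_one, map_ofNat, Complex.conj_I, Complex.conj_ofReal]

lemma hasFDerivAt_exp2 {u : ℂ → ℝ} {z : ℂ} (hu : DifferentiableAt ℝ u z) :
    HasFDerivAt (fun w => ((Real.exp (2 * u w) : ℝ) : ℂ))
      (Complex.ofRealCLM.comp (Real.exp (2 * u z) • ((2:ℝ) • fderiv ℝ u z))) z := by
  have h1 : HasFDerivAt (fun w => Real.exp (2 * u w))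
      (Real.exp (2 * u z) • ((2:ℝ) • fderiv ℝ u z)) z :=
    HasFDerivAt.exp (((hu.hasFDerivAt).const_mul (2:ℝ)))
  exact Complex.ofRealCLM.hasFDerivAt.comp z h1

lemma diffAt_exp2 {u : ℂ → ℝ} {z : ℂ} (hu : DifferentiableAt ℝ u z) :
    DifferentiableAt ℝ (fun w => ((Real.exp (2 * u w) : ℝ) : ℂ)) z :=
  (hasFDerivAt_exp2 hu).differentiableAt

lemma fderiv_exp2 {u : ℂ → ℝ} {z : ℂ} (hu : DifferentiableAt ℝ u z) (v : ℂ) :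
    fderiv ℝ (fun w => ((Real.exp (2 * u w) : ℝ) : ℂ)) z v
      = 2 * (Real.exp (2 * u z) : ℂ) * (fderiv ℝ u z v : ℂ) := by
  rw [(hasFDerivAt_exp2 hu).fderiv]
  simp [smul_eq_mul]
  ring

lemma wirtZ_exp2 {u : ℂ → ℝ} {z : ℂ} (hu : DifferentiableAt ℝ u z) :
    wirtZ (fun w => ((Real.exp (2 * u w) : ℝ) : ℂ)) z
      = 2 * (Real.exp (2 * u z) : ℂ) * wirtZ (fun w => ((u w : ℝ) : ℂ)) z := by
  unfold wirtZ
  rw [fderiv_exp2 hu 1, fderiv_exp2 hu Complex.I, fderiv_ofReal_comp hu]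
  simp only [ContinuousLinearMap.comp_apply, Complex.ofRealCLM_apply]
  ring


lemma wirtZ_linsum {m : ℕ} (c : Fin m → ℂ) (Gv : Fin m → ℂ → ℂ) (z : ℂ)
    (hG : ∀ i, DifferentiableAt ℝ (Gv i) z) :
    wirtZ (fun w => ∑ i, c i * Gv i w) z = ∑ i, c i * wirtZ (Gv i) z := by
  rw [wirtZ_sum _ (fun i _ => (hG i).const_mul (c i))]
  exact Finset.sum_congr rfl fun i _ => wirtZ_const_mul (c i) (hG i)

lemma wirtZbar_linsum {m : ℕ} (c : Fin m → ℂ) (Gv : Fin m → ℂ → ℂ) (z : ℂ)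
    (hG : ∀ i, DifferentiableAt ℝ (Gv i) z) :
    wirtZbar (fun w => ∑ i, c i * Gv i w) z = ∑ i, c i * wirtZbar (Gv i) z := by
  rw [wirtZbar_sum _ (fun i _ => (hG i).const_mul (c i))]
  exact Finset.sum_congr rfl fun i _ => wirtZbar_const_mul (c i) (hG i)

lemma ode_zero {N : ℕ} (Y : ℝ → Fin N → ℂ) (C : ℝ → Fin N → Fin N → ℂ)
    (hY : ∀ t, HasDerivAt Y (fun a => ∑ b, C t a b * Y t b) t)
    (hC : ∀ a b, Continuous fun t => C t a b)
    (hY0 : Y 0 = 0) : Y 1 = 0 := by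
  classical
  have hφ : Continuous fun t => ∑ a : Fin N, ∑ b : Fin N, ‖C t a b‖ :=
    continuous_finset_sum _ fun a _ => continuous_finset_sum _ fun b _ => (hC a b).norm
  obtain ⟨M, hM⟩ := (isCompact_Icc (a := (0:ℝ)) (b := 1)).exists_bound_of_continuousOn
    hφ.continuousOn
  set K := (N : ℝ) * max M 0 with hK
  have hCb : ∀ t ∈ Set.Icc (0:ℝ) 1, ∀ a b, ‖C t a b‖ ≤ max M 0 := by
    intro t ht a b
    have h1 : ‖C t a b‖ ≤ ∑ a' : Fin N, ∑ b' : Fin N, ‖C t a' b'‖ := by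
      calc ‖C t a b‖ ≤ ∑ b' : Fin N, ‖C t a b'‖ :=
            Finset.single_le_sum (fun _ _ => norm_nonneg _) (Finset.mem_univ b)
        _ ≤ _ := Finset.single_le_sum (f := fun a' => ∑ b' : Fin N, ‖C t a' b'‖)
            (fun _ _ => Finset.sum_nonneg fun _ _ => norm_nonneg _) (Finset.mem_univ a)
    refine h1.trans (le_trans (le_abs_self _) ?_)
    exact le_trans (hM t ht) (le_max_left _ _)
  have hYc : Continuous Y := continuous_iff_continuousAt.mpr fun t => (hY t).continuousAt
  have hbound : ∀ t ∈ Set.Ico (0:ℝ) 1,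
      ‖(fun a => ∑ b, C t a b * Y t b : Fin N → ℂ)‖ ≤ K * ‖Y t‖ + 0 := by
    intro t ht
    rw [add_zero]
    have hKY : 0 ≤ K * ‖Y t‖ := mul_nonneg
      (mul_nonneg (Nat.cast_nonneg N) (le_max_right _ _)) (norm_nonneg _)
    rw [pi_norm_le_iff_of_nonneg hKY]
    intro a
    calc ‖∑ b, C t a b * Y t b‖ ≤ ∑ b, ‖C t a b * Y t b‖ := norm_sum_le _ _
      _ ≤ ∑ _b : Fin N, max M 0 * ‖Y t‖ := by
          refine Finset.sum_le_sum fun b _ => ?_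
          rw [norm_mul]
          exact mul_le_mul (hCb t (Set.mem_Icc_of_Ico ht) a b) (norm_le_pi_norm (Y t) b)
            (norm_nonneg _) (le_max_right _ _)
      _ = K * ‖Y t‖ := by rw [Finset.sum_const]; simp [hK]; ring
  have hg := norm_le_gronwallBound_of_norm_deriv_right_le
    (f := Y) (f' := fun t => (fun a => ∑ b, C t a b * Y t b)) (δ := 0) (K := K) (ε := 0)
    (a := 0) (b := 1) hYc.continuousOn
    (fun t _ => (hY t).hasDerivWithinAt) (by simp [hY0]) hbound
  have h1 := hg 1 (by norm_num)
  rw [gronwallBound_ε0_δ0] at h1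
  simpa using norm_le_zero_iff.mp h1

end WirtAux


set_option maxHeartbeats 3000000 in
open WirtAux in
/-- if the Hopf field satisfies `N_z Ω = μ Ω` for some smooth function `μ`,
then the image of `f` lies in a real linear subspace of `ℝ^{n+1}` of dimension at most `5`
(so `f` lies in a great `S⁴ ⊂ S^n`). -/
theorem parallel_hopf_in_great_sphere (n : ℕ) (hn : 3 ≤ n)
    (f : ℂ → Fin (n + 1) → ℝ) (ρ : ℂ → ℝ) (hf : IsConfMinImm f ρ)
    (hμ : ∃ μ : ℂ → ℂ, ContDiff ℝ (⊤ : ℕ∞) μ ∧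
      ∀ (z : ℂ) (i : Fin (n + 1)), NZ f ρ (Hopf f ρ) z i = μ z * Hopf f ρ z i) :
    ∃ V : Submodule ℝ (Fin (n + 1) → ℝ), Module.finrank ℝ V ≤ 5 ∧ ∀ z : ℂ, f z ∈ V := by
  classical
  obtain ⟨μ, hμs, hμe⟩ := hμ
  obtain ⟨hfs, hρs, _hnorm, _hc0, _hcρ, hfzzb⟩ := hf
  -- component functions of the five generators
  set g0 : Fin (n+1) → ℂ → ℂ := fun i w => Fc f w i with hg0
  set g1 : Fin (n+1) → ℂ → ℂ := fun i w => WZ (Fc f) w i with hg1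
  set g2 : Fin (n+1) → ℂ → ℂ := fun i w => WZb (Fc f) w i with hg2
  set g3 : Fin (n+1) → ℂ → ℂ := fun i w => Hopf f ρ w i with hg3
  set g4 : Fin (n+1) → ℂ → ℂ := fun i w => (starRingEnd ℂ) (Hopf f ρ w i) with hg4
  set E : ℂ → ℂ := fun z => ((Real.exp (2 * ρ z) : ℝ) : ℂ) with hE
  set Em : ℂ → ℂ := fun z => ((Real.exp (-2 * ρ z) : ℝ) : ℂ) with hEm
  set q : ℂ → ℂ := fun z => pairC (Hopf f ρ z) (Hopf f ρ z) with hq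
  set c8 : ℂ → ℂ := fun z => -((1/2 : ℂ) * E z + 2 * wirtZbar (dZ ρ) z) with hc8
  -- smoothness
  have hfic : ∀ i, ContDiff ℝ (⊤ : ℕ∞) (fun w => f w i) := fun i =>
    (ContinuousLinearMap.proj i : (Fin (n+1) → ℝ) →L[ℝ] ℝ).contDiff.comp hfs
  have hρd : ∀ z, DifferentiableAt ℝ ρ z := fun z => (hρs.differentiable (by simp)) z
  have hfid : ∀ i z, DifferentiableAt ℝ (fun w => f w i) z := fun i z =>
    ((hfic i).differentiable (by simp)) z
  have hg0s : ∀ i, ContDiff ℝ (⊤ : ℕ∞) (g0 i) := fun i =>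
    Complex.ofRealCLM.contDiff.comp (hfic i)
  have hg1eq : ∀ i, g1 i = wirtZ (g0 i) := fun i => rfl
  have hg2eq : ∀ i, g2 i = wirtZbar (g0 i) := fun i => rfl
  have hg1s : ∀ i, ContDiff ℝ (⊤ : ℕ∞) (g1 i) := fun i => wirtZ_smooth (hg0s i)
  have hg2s : ∀ i, ContDiff ℝ (⊤ : ℕ∞) (g2 i) := fun i => wirtZbar_smooth (hg0s i)
  have hdZeq : dZ ρ = wirtZ (fun w => ((ρ w : ℝ) : ℂ)) := rfl
  have hdZs : ContDiff ℝ (⊤ : ℕ∞) (dZ ρ) := by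
    rw [hdZeq]; exact wirtZ_smooth (Complex.ofRealCLM.contDiff.comp hρs)
  have hg3eq : ∀ i, g3 i = fun w => wirtZ (g1 i) w - 2 * dZ ρ w * g1 i w := fun i => rfl
  have hg3s : ∀ i, ContDiff ℝ (⊤ : ℕ∞) (g3 i) := fun i => by
    rw [hg3eq i]
    exact (wirtZ_smooth (hg1s i)).sub ((contDiff_const.mul hdZs).mul (hg1s i))
  have hg4eq : ∀ i, g4 i = fun w => (starRingEnd ℂ) (g3 i w) := fun i => rfl
  have hg4s : ∀ i, ContDiff ℝ (⊤ : ℕ∞) (g4 i) := fun i => by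
    rw [hg4eq i]
    have : (fun w => (starRingEnd ℂ) (g3 i w))
        = (Complex.conjCLE.toContinuousLinearMap : ℂ → ℂ) ∘ (g3 i) := by
      funext w; simp [Complex.conjCLE_apply]
    rw [this]
    exact Complex.conjCLE.toContinuousLinearMap.contDiff.comp (hg3s i)
  have dg0 : ∀ i z, DifferentiableAt ℝ (g0 i) z := fun i z => diffAt (hg0s i) z
  have dg1 : ∀ i z, DifferentiableAt ℝ (g1 i) z := fun i z => diffAt (hg1s i) z
  have dg2 : ∀ i z, DifferentiableAt ℝ (g2 i) z := fun i z => diffAt (hg2s i) z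
  have dg3 : ∀ i z, DifferentiableAt ℝ (g3 i) z := fun i z => diffAt (hg3s i) z
  have dg4 : ∀ i z, DifferentiableAt ℝ (g4 i) z := fun i z => diffAt (hg4s i) z
  have hdZd : ∀ z, DifferentiableAt ℝ (dZ ρ) z := fun z => diffAt hdZs z
  have hEd : ∀ z, DifferentiableAt ℝ E z := fun z => diffAt_exp2 (hρd z)
  -- conjugation facts
  have hconj0 : ∀ i z, (starRingEnd ℂ) (g0 i z) = g0 i z := fun i z => Complex.conj_ofReal _
  have hconj1 : ∀ i z, (starRingEnd ℂ) (g1 i z) = g2 i z := fun i z =>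
    (wirtZbar_ofReal (u := fun w => f w i) (hfid i z)).symm
  have hconj2 : ∀ i z, (starRingEnd ℂ) (g2 i z) = g1 i z := fun i z => by
    rw [← hconj1 i z, Complex.conj_conj]
  have hconj3 : ∀ i z, (starRingEnd ℂ) (g3 i z) = g4 i z := fun i z => rfl
  have hconj4 : ∀ i z, (starRingEnd ℂ) (g4 i z) = g3 i z := fun i z => Complex.conj_conj _
  have hconjE : ∀ z, (starRingEnd ℂ) (E z) = E z := fun z => Complex.conj_ofReal _
  have hconjEm : ∀ z, (starRingEnd ℂ) (Em z) = Em z := fun z => Complex.conj_ofReal _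
  have hg2fun : ∀ i, g2 i = fun w => (starRingEnd ℂ) (g1 i w) := fun i =>
    funext fun w => (hconj1 i w).symm
  -- structure equations
  have eq1 : ∀ i z, wirtZ (g1 i) z = g3 i z + 2 * dZ ρ z * g1 i z := by
    intro i z
    have h := congrFun (hg3eq i) z
    rw [h]; ring
  have eq2 : ∀ i z, wirtZbar (g1 i) z = -(1 / 2 : ℂ) * E z * g0 i z := fun i z => hfzzb z i
  have eq3 : ∀ i z, wirtZ (g2 i) z = -(1 / 2 : ℂ) * E z * g0 i z := by
    intro i z
    rw [hg2fun i, wirtZ_conj (dg1 i z), eq2 i z]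
    simp only [map_mul, map_neg, map_div₀, map_one, map_ofNat, hconjE z, hconj0 i z]
  have eq4 : ∀ i z, wirtZbar (g2 i) z = 2 * (starRingEnd ℂ) (dZ ρ z) * g2 i z + g4 i z := by
    intro i z
    rw [hg2fun i, wirtZbar_conj (dg1 i z), eq1 i z]
    simp only [map_add, map_mul, map_ofNat, hconj1 i z, hconj3 i z]
    ring
  have eq5 : ∀ i z, wirtZ (g3 i) z = μ z * g3 i z - 2 * Em z * q z * g2 i z := by
    intro i z
    have h : wirtZ (g3 i) z + 2 * Em z * q z * g2 i z = μ z * g3 i z := hμe z i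
    linear_combination h
  have hwE : ∀ z, wirtZ E z = 2 * E z * dZ ρ z := fun z => wirtZ_exp2 (hρd z)
  have eq6 : ∀ i z, wirtZbar (g3 i) z = c8 z * g1 i z := by
    intro i z
    rw [hg3eq i]
    rw [wirtZbar_sub (diffAt (wirtZ_smooth (hg1s i)) z)
      (((hdZd z).const_mul 2).fun_mul (dg1 i z))]
    have hterm1 : wirtZbar (wirtZ (g1 i)) z
        = -(1 / 2 : ℂ) * (2 * E z * dZ ρ z) * g0 i z + (-(1 / 2 : ℂ) * E z) * g1 i z := by
      rw [wirt_symm (hg1s i) z]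
      have hfun2 : wirtZbar (g1 i) = fun w => (-(1 / 2 : ℂ) * E w) * g0 i w := by
        funext w
        rw [eq2 i w]
      rw [hfun2]
      rw [wirtZ_mul ((hEd z).const_mul (-(1/2 : ℂ))) (dg0 i z)]
      rw [wirtZ_const_mul (-(1/2 : ℂ)) (hEd z), hwE z]
      have hg1w : wirtZ (g0 i) z = g1 i z := (congrFun (hg1eq i) z).symm
      rw [hg1w]
    have hterm2 : wirtZbar (fun w => 2 * dZ ρ w * g1 i w) z
        = 2 * wirtZbar (dZ ρ) z * g1 i z + 2 * dZ ρ z * wirtZbar (g1 i) z := by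
      rw [wirtZbar_mul ((hdZd z).const_mul 2) (dg1 i z)]
      rw [wirtZbar_const_mul 2 (hdZd z)]
    rw [hterm1, hterm2, eq2 i z, hc8]
    ring
  have eq7 : ∀ i z, wirtZ (g4 i) z = (starRingEnd ℂ) (c8 z) * g2 i z := by
    intro i z
    rw [hg4eq i, wirtZ_conj (dg3 i z), eq6 i z]
    rw [map_mul, hconj1 i z]
  have eq8 : ∀ i z, wirtZbar (g4 i) z
      = (starRingEnd ℂ) (μ z) * g4 i z - 2 * Em z * (starRingEnd ℂ) (q z) * g1 i z := by
    intro i z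
    rw [hg4eq i, wirtZbar_conj (dg3 i z), eq5 i z]
    simp only [map_sub, map_mul, map_ofNat, hconj3 i z, hconj2 i z, hconjEm z]
  -- the candidate subspace
  set R1 : Fin (n+1) → ℝ := fun i => (g1 i 0).re with hR1
  set R2 : Fin (n+1) → ℝ := fun i => (g1 i 0).im with hR2
  set R3 : Fin (n+1) → ℝ := fun i => (g3 i 0).re with hR3
  set R4 : Fin (n+1) → ℝ := fun i => (g3 i 0).im with hR4
  set gen : Fin 5 → (Fin (n+1) → ℝ) := ![f 0, R1, R2, R3, R4] with hgen
  refine ⟨Submodule.span ℝ (Set.range gen), ?_, ?_⟩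
  · have h := finrank_range_le_card (R := ℝ) gen
    simpa [Set.finrank] using h
  intro z₁
  refine (Subspace.forall_mem_dualAnnihilator_apply_eq_zero_iff _ _).mp ?_
  intro ξ hξmem
  have hξV : ∀ w ∈ Submodule.span ℝ (Set.range gen), ξ w = 0 :=
    (Submodule.mem_dualAnnihilator ξ).mp hξmem
  have hξgen : ∀ a : Fin 5, ξ (gen a) = 0 := fun a =>
    hξV _ (Submodule.subset_span (Set.mem_range_self a))
  set ξv : Fin (n+1) → ℝ := fun i => ξ (fun j => if i = j then 1 else 0) with hξv
  have hξsum : ∀ x : Fin (n+1) → ℝ, ξ x = ∑ i, x i * ξv i := by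
    intro x
    conv_lhs => rw [pi_eq_sum_univ x]
    rw [map_sum]
    exact Finset.sum_congr rfl fun i _ => by rw [map_smul, smul_eq_mul, hξv]
  -- the five scalar functions
  set G : Fin 5 → Fin (n+1) → ℂ → ℂ := ![g0, g1, g2, g3, g4] with hG
  set hh : Fin 5 → ℂ → ℂ := fun a w => ∑ i, (ξv i : ℂ) * G a i w with hhdef
  have hGs : ∀ a i, ContDiff ℝ (⊤ : ℕ∞) (G a i) := by
    intro a i
    fin_cases a <;>
      simp only [hG, Matrix.cons_val_zero, Matrix.cons_val_one, Matrix.head_cons,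
        Matrix.cons_val_two, Matrix.tail_cons, Matrix.cons_val_three, Matrix.cons_val_four] <;>
      [exact hg0s i; exact hg1s i; exact hg2s i; exact hg3s i; exact hg4s i]
  have hGd : ∀ a i z, DifferentiableAt ℝ (G a i) z := fun a i z => diffAt (hGs a i) z
  have hhs : ∀ a, ContDiff ℝ (⊤ : ℕ∞) (hh a) := by
    intro a
    rw [hhdef]
    exact ContDiff.sum fun i _ => contDiff_const.mul (hGs a i)
  -- the five scalar functions obtained by pairing with ξ
  have hlin : ∀ (Gv : Fin (n+1) → ℂ → ℂ), (∀ i z, DifferentiableAt ℝ (Gv i) z) →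
      ∀ z : ℂ, wirtZ (fun w => ∑ i, (ξv i : ℂ) * Gv i w) z
        = ∑ i, (ξv i : ℂ) * wirtZ (Gv i) z := fun Gv hGv z =>
    wirtZ_linsum _ _ z (fun i => hGv i z)
  have hlinb : ∀ (Gv : Fin (n+1) → ℂ → ℂ), (∀ i z, DifferentiableAt ℝ (Gv i) z) →
      ∀ z : ℂ, wirtZbar (fun w => ∑ i, (ξv i : ℂ) * Gv i w) z
        = ∑ i, (ξv i : ℂ) * wirtZbar (Gv i) z := fun Gv hGv z =>
    wirtZbar_linsum _ _ z (fun i => hGv i z)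
  have hhZ0 : ∀ z, wirtZ (fun w => ∑ i, (ξv i : ℂ) * g0 i w) z
      = ∑ i, (ξv i : ℂ) * g1 i z := by
    intro z
    rw [hlin g0 dg0 z]
    exact Finset.sum_congr rfl fun i _ => by rw [← congrFun (hg1eq i) z]
  have hhZb0 : ∀ z, wirtZbar (fun w => ∑ i, (ξv i : ℂ) * g0 i w) z
      = ∑ i, (ξv i : ℂ) * g2 i z := by
    intro z
    rw [hlinb g0 dg0 z]
    exact Finset.sum_congr rfl fun i _ => by rw [← congrFun (hg2eq i) z]
  have hhZ1 : ∀ z, wirtZ (fun w => ∑ i, (ξv i : ℂ) * g1 i w) z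
      = 2 * dZ ρ z * (∑ i, (ξv i : ℂ) * g1 i z) + ∑ i, (ξv i : ℂ) * g3 i z := by
    intro z
    rw [hlin g1 dg1 z]
    have : ∀ i : Fin (n+1), (ξv i : ℂ) * wirtZ (g1 i) z
        = 2 * dZ ρ z * ((ξv i : ℂ) * g1 i z) + (ξv i : ℂ) * g3 i z := fun i => by
      rw [eq1 i z]; ring
    rw [Finset.sum_congr rfl (fun i _ => this i), Finset.sum_add_distrib, ← Finset.mul_sum]
  have hhZb1 : ∀ z, wirtZbar (fun w => ∑ i, (ξv i : ℂ) * g1 i w) z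
      = -(1/2 : ℂ) * E z * (∑ i, (ξv i : ℂ) * g0 i z) := by
    intro z
    rw [hlinb g1 dg1 z]
    have : ∀ i : Fin (n+1), (ξv i : ℂ) * wirtZbar (g1 i) z
        = -(1/2 : ℂ) * E z * ((ξv i : ℂ) * g0 i z) := fun i => by
      rw [eq2 i z]; ring
    rw [Finset.sum_congr rfl (fun i _ => this i), ← Finset.mul_sum]
  have hhZ2 : ∀ z, wirtZ (fun w => ∑ i, (ξv i : ℂ) * g2 i w) z
      = -(1/2 : ℂ) * E z * (∑ i, (ξv i : ℂ) * g0 i z) := by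
    intro z
    rw [hlin g2 dg2 z]
    have : ∀ i : Fin (n+1), (ξv i : ℂ) * wirtZ (g2 i) z
        = -(1/2 : ℂ) * E z * ((ξv i : ℂ) * g0 i z) := fun i => by
      rw [eq3 i z]; ring
    rw [Finset.sum_congr rfl (fun i _ => this i), ← Finset.mul_sum]
  have hhZb2 : ∀ z, wirtZbar (fun w => ∑ i, (ξv i : ℂ) * g2 i w) z
      = 2 * (starRingEnd ℂ) (dZ ρ z) * (∑ i, (ξv i : ℂ) * g2 i z)
        + ∑ i, (ξv i : ℂ) * g4 i z := by
    intro z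
    rw [hlinb g2 dg2 z]
    have : ∀ i : Fin (n+1), (ξv i : ℂ) * wirtZbar (g2 i) z
        = 2 * (starRingEnd ℂ) (dZ ρ z) * ((ξv i : ℂ) * g2 i z) + (ξv i : ℂ) * g4 i z :=
      fun i => by rw [eq4 i z]; ring
    rw [Finset.sum_congr rfl (fun i _ => this i), Finset.sum_add_distrib, ← Finset.mul_sum]
  have hhZ3 : ∀ z, wirtZ (fun w => ∑ i, (ξv i : ℂ) * g3 i w) z
      = μ z * (∑ i, (ξv i : ℂ) * g3 i z) - 2 * Em z * q z * (∑ i, (ξv i : ℂ) * g2 i z) := by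
    intro z
    rw [hlin g3 dg3 z]
    have : ∀ i : Fin (n+1), (ξv i : ℂ) * wirtZ (g3 i) z
        = μ z * ((ξv i : ℂ) * g3 i z) - 2 * Em z * q z * ((ξv i : ℂ) * g2 i z) :=
      fun i => by rw [eq5 i z]; ring
    rw [Finset.sum_congr rfl (fun i _ => this i), Finset.sum_sub_distrib,
      ← Finset.mul_sum, ← Finset.mul_sum]
  have hhZb3 : ∀ z, wirtZbar (fun w => ∑ i, (ξv i : ℂ) * g3 i w) z
      = c8 z * (∑ i, (ξv i : ℂ) * g1 i z) := by
    intro z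
    rw [hlinb g3 dg3 z]
    have : ∀ i : Fin (n+1), (ξv i : ℂ) * wirtZbar (g3 i) z
        = c8 z * ((ξv i : ℂ) * g1 i z) := fun i => by rw [eq6 i z]; ring
    rw [Finset.sum_congr rfl (fun i _ => this i), ← Finset.mul_sum]
  have hhZ4 : ∀ z, wirtZ (fun w => ∑ i, (ξv i : ℂ) * g4 i w) z
      = (starRingEnd ℂ) (c8 z) * (∑ i, (ξv i : ℂ) * g2 i z) := by
    intro z
    rw [hlin g4 dg4 z]
    have : ∀ i : Fin (n+1), (ξv i : ℂ) * wirtZ (g4 i) z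
        = (starRingEnd ℂ) (c8 z) * ((ξv i : ℂ) * g2 i z) := fun i => by
      rw [eq7 i z]; ring
    rw [Finset.sum_congr rfl (fun i _ => this i), ← Finset.mul_sum]
  have hhZb4 : ∀ z, wirtZbar (fun w => ∑ i, (ξv i : ℂ) * g4 i w) z
      = (starRingEnd ℂ) (μ z) * (∑ i, (ξv i : ℂ) * g4 i z)
        - 2 * Em z * (starRingEnd ℂ) (q z) * (∑ i, (ξv i : ℂ) * g1 i z) := by
    intro z
    rw [hlinb g4 dg4 z]
    have : ∀ i : Fin (n+1), (ξv i : ℂ) * wirtZbar (g4 i) z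
        = (starRingEnd ℂ) (μ z) * ((ξv i : ℂ) * g4 i z)
          - 2 * Em z * (starRingEnd ℂ) (q z) * ((ξv i : ℂ) * g1 i z) := fun i => by
      rw [eq8 i z]; ring
    rw [Finset.sum_congr rfl (fun i _ => this i), Finset.sum_sub_distrib,
      ← Finset.mul_sum, ← Finset.mul_sum]
  -- assemble the vector of scalar functions
  set SS : Fin 5 → ℂ → ℂ := ![fun w => ∑ i, (ξv i : ℂ) * g0 i w,
    fun w => ∑ i, (ξv i : ℂ) * g1 i w, fun w => ∑ i, (ξv i : ℂ) * g2 i w,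
    fun w => ∑ i, (ξv i : ℂ) * g3 i w, fun w => ∑ i, (ξv i : ℂ) * g4 i w] with hSS
  have hSS0 : SS 0 = fun w => ∑ i, (ξv i : ℂ) * g0 i w := rfl
  have hSS1 : SS 1 = fun w => ∑ i, (ξv i : ℂ) * g1 i w := rfl
  have hSS2 : SS 2 = fun w => ∑ i, (ξv i : ℂ) * g2 i w := rfl
  have hSS3 : SS 3 = fun w => ∑ i, (ξv i : ℂ) * g3 i w := rfl
  have hSS4 : SS 4 = fun w => ∑ i, (ξv i : ℂ) * g4 i w := rfl
  have hSSs : ∀ a, ContDiff ℝ (⊤ : ℕ∞) (SS a) := by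
    intro a
    fin_cases a
    · exact hSS0 ▸ ContDiff.sum fun i _ => contDiff_const.mul (hg0s i)
    · exact hSS1 ▸ ContDiff.sum fun i _ => contDiff_const.mul (hg1s i)
    · exact hSS2 ▸ ContDiff.sum fun i _ => contDiff_const.mul (hg2s i)
    · exact hSS3 ▸ ContDiff.sum fun i _ => contDiff_const.mul (hg3s i)
    · exact hSS4 ▸ ContDiff.sum fun i _ => contDiff_const.mul (hg4s i)
  -- the coefficient matrix
  set CC : ℂ → Fin 5 → Fin 5 → ℂ := fun z => ![
    ![0, z₁, (starRingEnd ℂ) z₁, 0, 0],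
    ![-(1/2 : ℂ) * E z * (starRingEnd ℂ) z₁, 2 * dZ ρ z * z₁, 0, z₁, 0],
    ![-(1/2 : ℂ) * E z * z₁, 0, 2 * (starRingEnd ℂ) (dZ ρ z) * (starRingEnd ℂ) z₁, 0,
      (starRingEnd ℂ) z₁],
    ![0, c8 z * (starRingEnd ℂ) z₁, -(2 * Em z * q z) * z₁, μ z * z₁, 0],
    ![0, -(2 * Em z * (starRingEnd ℂ) (q z)) * (starRingEnd ℂ) z₁,
      (starRingEnd ℂ) (c8 z) * z₁, 0, (starRingEnd ℂ) (μ z) * (starRingEnd ℂ) z₁]] with hCC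
  have hSSZ0 : ∀ z : ℂ, wirtZ (SS 0) z * z₁ + wirtZbar (SS 0) z * (starRingEnd ℂ) z₁
      = ∑ b, CC z 0 b * SS b z := by
    intro z
    rw [hSS0, hhZ0 z, hhZb0 z, Fin.sum_univ_five]
    simp only [hCC, hSS, Matrix.cons_val_zero, Matrix.cons_val_one, Matrix.head_cons,
        Matrix.cons_val_two, Matrix.tail_cons, Matrix.cons_val_three, Matrix.cons_val_four]
    ring
  have hSSZ1 : ∀ z : ℂ, wirtZ (SS 1) z * z₁ + wirtZbar (SS 1) z * (starRingEnd ℂ) z₁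
      = ∑ b, CC z 1 b * SS b z := by
    intro z
    rw [hSS1, hhZ1 z, hhZb1 z, Fin.sum_univ_five]
    simp only [hCC, hSS, Matrix.cons_val_zero, Matrix.cons_val_one, Matrix.head_cons,
        Matrix.cons_val_two, Matrix.tail_cons, Matrix.cons_val_three, Matrix.cons_val_four]
    ring
  have hSSZ2 : ∀ z : ℂ, wirtZ (SS 2) z * z₁ + wirtZbar (SS 2) z * (starRingEnd ℂ) z₁
      = ∑ b, CC z 2 b * SS b z := by
    intro z
    rw [hSS2, hhZ2 z, hhZb2 z, Fin.sum_univ_five]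
    simp only [hCC, hSS, Matrix.cons_val_zero, Matrix.cons_val_one, Matrix.head_cons,
        Matrix.cons_val_two, Matrix.tail_cons, Matrix.cons_val_three, Matrix.cons_val_four]
    ring
  have hSSZ3 : ∀ z : ℂ, wirtZ (SS 3) z * z₁ + wirtZbar (SS 3) z * (starRingEnd ℂ) z₁
      = ∑ b, CC z 3 b * SS b z := by
    intro z
    rw [hSS3, hhZ3 z, hhZb3 z, Fin.sum_univ_five]
    simp only [hCC, hSS, Matrix.cons_val_zero, Matrix.cons_val_one, Matrix.head_cons,
        Matrix.cons_val_two, Matrix.tail_cons, Matrix.cons_val_three, Matrix.cons_val_four]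
    ring
  have hSSZ4 : ∀ z : ℂ, wirtZ (SS 4) z * z₁ + wirtZbar (SS 4) z * (starRingEnd ℂ) z₁
      = ∑ b, CC z 4 b * SS b z := by
    intro z
    rw [hSS4, hhZ4 z, hhZb4 z, Fin.sum_univ_five]
    simp only [hCC, hSS, Matrix.cons_val_zero, Matrix.cons_val_one, Matrix.head_cons,
        Matrix.cons_val_two, Matrix.tail_cons, Matrix.cons_val_three, Matrix.cons_val_four]
    ring
  have hSSZ : ∀ (a : Fin 5) (z : ℂ), wirtZ (SS a) z * z₁ + wirtZbar (SS a) z * (starRingEnd ℂ) z₁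
      = ∑ b, CC z a b * SS b z := by
    intro a z
    fin_cases a
    · exact hSSZ0 z
    · exact hSSZ1 z
    · exact hSSZ2 z
    · exact hSSZ3 z
    · exact hSSZ4 z
  -- the path and the ODE
  set γ : ℝ → ℂ := fun t => t • z₁ with hγdef
  have hγc : Continuous γ := continuous_id.smul continuous_const
  have hγd : ∀ t, HasDerivAt γ z₁ t := fun t => by
    have h := (hasDerivAt_id t).smul_const z₁; rw [one_smul] at h; exact h
  have hEc : Continuous E := by
    rw [hE]
    exact Complex.continuous_ofReal.comp (Real.continuous_exp.comp
      (continuous_const.mul hρs.continuous))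
  have hEmc : Continuous Em := by
    rw [hEm]
    exact Complex.continuous_ofReal.comp (Real.continuous_exp.comp
      (continuous_const.mul hρs.continuous))
  have hqeq : q = fun z => ∑ i, g3 i z * g3 i z := rfl
  have hqc : Continuous q := by
    rw [hqeq]
    exact continuous_finset_sum _ fun i _ => ((hg3s i).continuous).mul ((hg3s i).continuous)
  have hdZc : Continuous (dZ ρ) := hdZs.continuous
  have hc8c : Continuous c8 := by
    rw [hc8]
    exact ((continuous_const.mul hEc).add
      (continuous_const.mul (wirtZbar_smooth hdZs).continuous)).neg
  have hEc' : Continuous fun t => E (γ t) := hEc.comp hγc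
  have hEmc' : Continuous fun t => Em (γ t) := hEmc.comp hγc
  have hqc' : Continuous fun t => q (γ t) := hqc.comp hγc
  have hqcc' : Continuous fun t => (starRingEnd ℂ) (q (γ t)) :=
    Complex.continuous_conj.comp hqc'
  have hdZc' : Continuous fun t => dZ ρ (γ t) := hdZc.comp hγc
  have hdZcc' : Continuous fun t => (starRingEnd ℂ) (dZ ρ (γ t)) :=
    Complex.continuous_conj.comp hdZc'
  have hc8c' : Continuous fun t => c8 (γ t) := hc8c.comp hγc
  have hc8cc' : Continuous fun t => (starRingEnd ℂ) (c8 (γ t)) :=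
    Complex.continuous_conj.comp hc8c'
  have hμc' : Continuous fun t => μ (γ t) := hμs.continuous.comp hγc
  have hμcc' : Continuous fun t => (starRingEnd ℂ) (μ (γ t)) :=
    Complex.continuous_conj.comp hμc'
  have hCCc : ∀ a b : Fin 5, Continuous fun t => CC (γ t) a b := by
    intro a b
    fin_cases a <;> fin_cases b <;>
      simp only [hCC, Matrix.cons_val_zero, Matrix.cons_val_one, Matrix.head_cons,
        Matrix.cons_val_two, Matrix.tail_cons, Matrix.cons_val_three, Matrix.cons_val_four]
    · exact continuous_const
    · exact continuous_const
    · exact continuous_const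
    · exact continuous_const
    · exact continuous_const
    · exact (continuous_const.mul hEc').mul continuous_const
    · exact (continuous_const.mul hdZc').mul continuous_const
    · exact continuous_const
    · exact continuous_const
    · exact continuous_const
    · exact (continuous_const.mul hEc').mul continuous_const
    · exact continuous_const
    · exact (continuous_const.mul hdZcc').mul continuous_const
    · exact continuous_const
    · exact continuous_const
    · exact continuous_const
    · exact hc8c'.mul continuous_const
    · exact ((continuous_const.mul hEmc').mul hqc').neg.mul continuous_const
    · exact hμc'.mul continuous_const
    · exact continuous_const
    · exact continuous_const
    · exact ((continuous_const.mul hEmc').mul hqcc').neg.mul continuous_const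
    · exact hc8cc'.mul continuous_const
    · exact continuous_const
    · exact hμcc'.mul continuous_const
  set Y : ℝ → Fin 5 → ℂ := fun t a => SS a (γ t) with hYdef
  have hYd : ∀ t, HasDerivAt Y (fun a => ∑ b, CC (γ t) a b * Y t b) t := by
    intro t
    rw [hasDerivAt_pi]
    intro a
    have h1 : HasDerivAt (fun s => SS a (γ s)) (fderiv ℝ (SS a) (γ t) z₁) t :=
      (diffAt (hSSs a) (γ t)).hasFDerivAt.comp_hasDerivAt t (hγd t)
    have h2 : fderiv ℝ (SS a) (γ t) z₁ = ∑ b, CC (γ t) a b * Y t b := by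
      rw [fderiv_eq_wirt, hSSZ a (γ t)]
    exact h2 ▸ h1
  -- initial conditions
  have hgen0 : ξ (f 0) = 0 := by simpa [hgen] using hξgen 0
  have hgen1 : ξ R1 = 0 := by simpa [hgen] using hξgen 1
  have hgen2 : ξ R2 = 0 := by simpa [hgen] using hξgen 2
  have hgen3 : ξ R3 = 0 := by simpa [hgen] using hξgen 3
  have hgen4 : ξ R4 = 0 := by simpa [hgen] using hξgen 4
  have hsum0 : ∀ w : ℂ, (∑ i, (ξv i : ℂ) * g0 i w) = ((ξ (f w) : ℝ) : ℂ) := by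
    intro w
    rw [hξsum (f w)]
    push_cast
    refine Finset.sum_congr rfl fun i _ => ?_
    simp only [hg0, Fc, cV]
    ring
  have hinit1 : (∑ i, (ξv i : ℂ) * g1 i 0) = 0 := by
    have e : (∑ i, (ξv i : ℂ) * g1 i 0)
        = ((ξ R1 : ℝ) : ℂ) + ((ξ R2 : ℝ) : ℂ) * Complex.I := by
      rw [hξsum R1, hξsum R2]
      push_cast
      rw [Finset.sum_mul, ← Finset.sum_add_distrib]
      refine Finset.sum_congr rfl fun i _ => ?_
      rw [← Complex.re_add_im (g1 i 0)]
      simp only [hR1, hR2]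
      ring
    rw [e, hgen1, hgen2]
    simp
  have hinit3 : (∑ i, (ξv i : ℂ) * g3 i 0) = 0 := by
    have e : (∑ i, (ξv i : ℂ) * g3 i 0)
        = ((ξ R3 : ℝ) : ℂ) + ((ξ R4 : ℝ) : ℂ) * Complex.I := by
      rw [hξsum R3, hξsum R4]
      push_cast
      rw [Finset.sum_mul, ← Finset.sum_add_distrib]
      refine Finset.sum_congr rfl fun i _ => ?_
      rw [← Complex.re_add_im (g3 i 0)]
      simp only [hR3, hR4]
      ring
    rw [e, hgen3, hgen4]
    simp
  have hinit0 : (∑ i, (ξv i : ℂ) * g0 i 0) = 0 := by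
    rw [hsum0 0, hgen0]
    simp
  have hinit2 : (∑ i, (ξv i : ℂ) * g2 i 0) = 0 := by
    have e : (∑ i, (ξv i : ℂ) * g2 i 0)
        = (starRingEnd ℂ) (∑ i, (ξv i : ℂ) * g1 i 0) := by
      rw [map_sum]
      exact Finset.sum_congr rfl fun i _ => by
        rw [map_mul, Complex.conj_ofReal, hconj1 i 0]
    rw [e, hinit1, map_zero]
  have hinit4 : (∑ i, (ξv i : ℂ) * g4 i 0) = 0 := by
    have e : (∑ i, (ξv i : ℂ) * g4 i 0)
        = (starRingEnd ℂ) (∑ i, (ξv i : ℂ) * g3 i 0) := by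
      rw [map_sum]
      exact Finset.sum_congr rfl fun i _ => by
        rw [map_mul, Complex.conj_ofReal, hconj3 i 0]
    rw [e, hinit3, map_zero]
  have hγ0 : γ 0 = 0 := by simp [hγdef]
  have hY0 : Y 0 = 0 := by
    funext a
    rw [hYdef]
    simp only [hγ0]
    fin_cases a
    · exact hSS0 ▸ hinit0
    · exact hSS1 ▸ hinit1
    · exact hSS2 ▸ hinit2
    · exact hSS3 ▸ hinit3
    · exact hSS4 ▸ hinit4
  have hY1 : Y 1 = 0 := ode_zero Y (fun t => CC (γ t)) hYd hCCc hY0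
  have hγ1 : γ 1 = z₁ := by simp [hγdef]
  have hfin : SS 0 z₁ = 0 := by
    have h := congrFun hY1 0
    rw [hYdef] at h
    simpa [hγ1] using h
  have e : SS 0 z₁ = ((ξ (f z₁) : ℝ) : ℂ) := by
    have := congrFun hSS0 z₁
    rw [this, hsum0 z₁]
  rw [e] at hfin
  exact_mod_cast hfin
end
end

section
/- Linear independence in the superminimal case (core of Proposition 3.4): let n ≥ 5 and let f : ℂ → S^n be a conformal minimal immersion with vanishing Hopf differential, ⟨Ω, Ω⟩ ≡ 0, which is full in S^n (its image is not contained in any proper real linear subspace of ℝ^{n+1}). If c ∈ ℂ and E ∈ ℝ^{n+1} is a constant vector such that c Ω(z) + c̄ Ω̄(z) + E^⊥(z) = 0 for all z ∈ ℂ, then c = 0 and E = 0. Consequently, writing Ω = Ω₁ + i Ω₂ with Ω₁, Ω₂ real, the real span of {Ω₁, Ω₂, e₀^⊥, …, e_n^⊥} (where e₀, …, e_n is the standard basis of ℝ^{n+1}) has dimension n + 3. -/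
open Complex

noncomputable section

open scoped ContDiff

section wirtAPI
section wirtlemmas
variable {g h : ℂ → ℂ} {z : ℂ}

lemma wirtZ_congr (he : g =ᶠ[nhds z] h) : wirtZ g z = wirtZ h z := by
  unfold wirtZ; rw [he.fderiv_eq]

lemma wirtZbar_congr (he : g =ᶠ[nhds z] h) : wirtZbar g z = wirtZbar h z := by
  unfold wirtZbar; rw [he.fderiv_eq]

lemma wirtZ_const (c : ℂ) : wirtZ (fun _ => c) z = 0 := by
  unfold wirtZ; simp

lemma wirtZbar_const (c : ℂ) : wirtZbar (fun _ => c) z = 0 := by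
  unfold wirtZbar; simp

lemma wirtZ_add (hg : DifferentiableAt ℝ g z) (hh : DifferentiableAt ℝ h z) :
    wirtZ (fun w => g w + h w) z = wirtZ g z + wirtZ h z := by
  unfold wirtZ; rw [fderiv_fun_add hg hh]; simp; ring

lemma wirtZbar_add (hg : DifferentiableAt ℝ g z) (hh : DifferentiableAt ℝ h z) :
    wirtZbar (fun w => g w + h w) z = wirtZbar g z + wirtZbar h z := by
  unfold wirtZbar; rw [fderiv_fun_add hg hh]; simp; ring

lemma wirtZ_mul (hg : DifferentiableAt ℝ g z) (hh : DifferentiableAt ℝ h z) :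
    wirtZ (fun w => g w * h w) z = wirtZ g z * h z + g z * wirtZ h z := by
  unfold wirtZ; rw [fderiv_fun_mul hg hh]; simp [smul_eq_mul]; ring

lemma wirtZbar_mul (hg : DifferentiableAt ℝ g z) (hh : DifferentiableAt ℝ h z) :
    wirtZbar (fun w => g w * h w) z = wirtZbar g z * h z + g z * wirtZbar h z := by
  unfold wirtZbar; rw [fderiv_fun_mul hg hh]; simp [smul_eq_mul]; ring

lemma wirtZ_neg (hg : DifferentiableAt ℝ g z) :
    wirtZ (fun w => -(g w)) z = -(wirtZ g z) := by
  unfold wirtZ; rw [fderiv_fun_neg]; simp; ring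

lemma wirtZbar_neg (hg : DifferentiableAt ℝ g z) :
    wirtZbar (fun w => -(g w)) z = -(wirtZbar g z) := by
  unfold wirtZbar; rw [fderiv_fun_neg]; simp; ring

lemma wirtZ_sub (hg : DifferentiableAt ℝ g z) (hh : DifferentiableAt ℝ h z) :
    wirtZ (fun w => g w - h w) z = wirtZ g z - wirtZ h z := by
  simp only [sub_eq_add_neg]
  rw [wirtZ_add hg hh.fun_neg, wirtZ_neg hh]

lemma wirtZbar_sub (hg : DifferentiableAt ℝ g z) (hh : DifferentiableAt ℝ h z) :
    wirtZbar (fun w => g w - h w) z = wirtZbar g z - wirtZbar h z := by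
  simp only [sub_eq_add_neg]
  rw [wirtZbar_add hg hh.fun_neg, wirtZbar_neg hh]

lemma wirtZ_const_mul (c : ℂ) (hg : DifferentiableAt ℝ g z) :
    wirtZ (fun w => c * g w) z = c * wirtZ g z := by
  rw [wirtZ_mul (differentiableAt_const c) hg, wirtZ_const]; ring

lemma wirtZbar_const_mul (c : ℂ) (hg : DifferentiableAt ℝ g z) :
    wirtZbar (fun w => c * g w) z = c * wirtZbar g z := by
  rw [wirtZbar_mul (differentiableAt_const c) hg, wirtZbar_const]; ring

lemma wirtZ_sum {ι : Type*} (s : Finset ι) (G : ι → ℂ → ℂ)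
    (hG : ∀ i ∈ s, DifferentiableAt ℝ (G i) z) :
    wirtZ (fun w => ∑ i ∈ s, G i w) z = ∑ i ∈ s, wirtZ (G i) z := by
  unfold wirtZ; rw [fderiv_fun_sum hG]
  simp only [ContinuousLinearMap.coe_sum', Finset.sum_apply, Finset.mul_sum,
    Finset.sum_sub_distrib, mul_sub]

lemma wirtZbar_sum {ι : Type*} (s : Finset ι) (G : ι → ℂ → ℂ)
    (hG : ∀ i ∈ s, DifferentiableAt ℝ (G i) z) :
    wirtZbar (fun w => ∑ i ∈ s, G i w) z = ∑ i ∈ s, wirtZbar (G i) z := by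
  unfold wirtZbar; rw [fderiv_fun_sum hG]
  simp only [ContinuousLinearMap.coe_sum', Finset.sum_apply, Finset.mul_sum,
    Finset.sum_add_distrib, mul_add]

lemma fderiv_conj_comp (v : ℂ) :
    fderiv ℝ (fun w => (starRingEnd ℂ) (g w)) z v = (starRingEnd ℂ) (fderiv ℝ g z v) := by
  have h : (fun w => (starRingEnd ℂ) (g w)) = (Complex.conjCLE ∘ g) := rfl
  rw [h, ContinuousLinearEquiv.comp_fderiv]
  rfl

lemma wirtZ_conj :
    wirtZ (fun w => (starRingEnd ℂ) (g w)) z = (starRingEnd ℂ) (wirtZbar g z) := by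
  unfold wirtZ wirtZbar
  rw [fderiv_conj_comp, fderiv_conj_comp]
  rw [map_mul, map_add, map_mul, Complex.conj_I]
  rw [show (starRingEnd ℂ) (1/2 : ℂ) = (1/2 : ℂ) by
    simp [Complex.ext_iff]]
  ring

lemma wirtZbar_conj :
    wirtZbar (fun w => (starRingEnd ℂ) (g w)) z = (starRingEnd ℂ) (wirtZ g z) := by
  unfold wirtZ wirtZbar
  rw [fderiv_conj_comp, fderiv_conj_comp]
  rw [map_mul, map_sub, map_mul, Complex.conj_I]
  rw [show (starRingEnd ℂ) (1/2 : ℂ) = (1/2 : ℂ) by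
    simp [Complex.ext_iff]]
  ring

lemma fderiv_eq_wirt (hg : DifferentiableAt ℝ g z) (v : ℂ) :
    fderiv ℝ g z v = v * wirtZ g z + (starRingEnd ℂ) v * wirtZbar g z := by
  obtain ⟨x, y, rfl⟩ : ∃ x y : ℝ, v = (x : ℂ) + (y : ℂ) * Complex.I :=
    ⟨v.re, v.im, (Complex.re_add_im v).symm⟩
  have hv : ((x : ℂ) + (y : ℂ) * Complex.I) = (x : ℝ) • (1 : ℂ) + (y : ℝ) • Complex.I := by
    rw [real_smul, real_smul, mul_one]
  rw [show (starRingEnd ℂ) ((x : ℂ) + (y : ℂ) * Complex.I) = (x : ℂ) - (y : ℂ) * Complex.I by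
    rw [map_add, map_mul, Complex.conj_I, Complex.conj_ofReal, Complex.conj_ofReal]; ring]
  conv_lhs => rw [hv]
  rw [map_add, map_smul, map_smul]
  unfold wirtZ wirtZbar
  set a := fderiv ℝ g z 1
  set b := fderiv ℝ g z Complex.I
  simp only [real_smul, smul_eq_mul]
  linear_combination ((y : ℂ) * b) * Complex.I_sq

lemma ContDiff.wirtZ_smooth (hg : ContDiff ℝ ∞ g) : ContDiff ℝ ∞ (wirtZ g) := by
  have h1 : ContDiff ℝ ∞ (fderiv ℝ g) := hg.fderiv_right (by simp)
  have h2 : ∀ v : ℂ, ContDiff ℝ ∞ (fun z => fderiv ℝ g z v) := fun v =>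
    (ContinuousLinearMap.apply ℝ ℂ v).contDiff.comp h1
  unfold wirtZ
  exact contDiff_const.mul ((h2 1).sub (contDiff_const.mul (h2 Complex.I)))

lemma ContDiff.wirtZbar_smooth (hg : ContDiff ℝ ∞ g) : ContDiff ℝ ∞ (wirtZbar g) := by
  have h1 : ContDiff ℝ ∞ (fderiv ℝ g) := hg.fderiv_right (by simp)
  have h2 : ∀ v : ℂ, ContDiff ℝ ∞ (fun z => fderiv ℝ g z v) := fun v =>
    (ContinuousLinearMap.apply ℝ ℂ v).contDiff.comp h1
  unfold wirtZbar
  exact contDiff_const.mul ((h2 1).add (contDiff_const.mul (h2 Complex.I)))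

lemma fderiv_fderiv_apply (hg : ContDiff ℝ ∞ g) (u v : ℂ) :
    fderiv ℝ (fun w => fderiv ℝ g w v) z u = fderiv ℝ (fderiv ℝ g) z u v := by
  have h1 : ContDiff ℝ ∞ (fderiv ℝ g) := hg.fderiv_right (by simp)
  have hd : DifferentiableAt ℝ (fderiv ℝ g) z :=
    (h1.differentiable (by simp)).differentiableAt
  rw [fderiv_clm_apply hd (differentiableAt_const v)]
  simp

lemma fderiv_lincomb {p q : ℂ → ℂ} (a b : ℂ) (hp : DifferentiableAt ℝ p z)
    (hq : DifferentiableAt ℝ q z) (v : ℂ) :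
    fderiv ℝ (fun w => a * p w + b * q w) z v
      = a * fderiv ℝ p z v + b * fderiv ℝ q z v := by
  rw [fderiv_fun_add ((hp.const_mul a)) ((hq.const_mul b)),
    fderiv_const_mul hp a, fderiv_const_mul hq b]
  simp

lemma wirt_swap (hg : ContDiff ℝ ∞ g) (z : ℂ) :
    wirtZbar (wirtZ g) z = wirtZ (wirtZbar g) z := by
  have hsymm : IsSymmSndFDerivAt ℝ g z :=
    (hg.contDiffAt).isSymmSndFDerivAt (by simp only [minSmoothness_of_isRCLikeNormedField]; exact WithTop.coe_le_coe.mpr le_top)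
  have h1 : ContDiff ℝ ∞ (fderiv ℝ g) := hg.fderiv_right (by simp)
  have h2 : ∀ v : ℂ, DifferentiableAt ℝ (fun w => fderiv ℝ g w v) z := fun v =>
    (((ContinuousLinearMap.apply ℝ ℂ v).contDiff.comp h1).differentiable (by simp)) z
  have key : fderiv ℝ (fun w => fderiv ℝ g w Complex.I) z 1
      = fderiv ℝ (fun w => fderiv ℝ g w 1) z Complex.I := by
    rw [fderiv_fderiv_apply hg, fderiv_fderiv_apply hg]
    exact hsymm 1 Complex.I
  have eZ : wirtZ g = fun w => (1/2 : ℂ) * (fun w => fderiv ℝ g w 1) w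
      + (-Complex.I/2) * (fun w => fderiv ℝ g w Complex.I) w := by
    funext w; unfold wirtZ; ring
  have eZb : wirtZbar g = fun w => (1/2 : ℂ) * (fun w => fderiv ℝ g w 1) w
      + (Complex.I/2) * (fun w => fderiv ℝ g w Complex.I) w := by
    funext w; unfold wirtZbar; ring
  have L : wirtZbar (wirtZ g) z = (1/2 : ℂ) * (fderiv ℝ (wirtZ g) z 1
      + Complex.I * fderiv ℝ (wirtZ g) z Complex.I) := rfl
  have R : wirtZ (wirtZbar g) z = (1/2 : ℂ) * (fderiv ℝ (wirtZbar g) z 1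
      - Complex.I * fderiv ℝ (wirtZbar g) z Complex.I) := rfl
  rw [L, R, eZ, eZb]
  rw [fderiv_lincomb _ _ (h2 1) (h2 Complex.I), fderiv_lincomb _ _ (h2 1) (h2 Complex.I),
    fderiv_lincomb _ _ (h2 1) (h2 Complex.I), fderiv_lincomb _ _ (h2 1) (h2 Complex.I)]
  rw [key]
  ring

lemma cexp_comp_hasFDerivAt (hg : DifferentiableAt ℝ g z) :
    HasFDerivAt (fun w => Complex.exp (g w))
      ((((1 : ℂ →L[ℂ] ℂ).smulRight (Complex.exp (g z))).restrictScalars ℝ).comp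
        (fderiv ℝ g z)) z :=
  ((Complex.hasDerivAt_exp (g z)).hasFDerivAt.restrictScalars ℝ).comp z hg.hasFDerivAt

lemma wirtZ_cexp (hg : DifferentiableAt ℝ g z) :
    wirtZ (fun w => Complex.exp (g w)) z = Complex.exp (g z) * wirtZ g z := by
  unfold wirtZ
  rw [(cexp_comp_hasFDerivAt hg).fderiv]
  simp only [ContinuousLinearMap.comp_apply, ContinuousLinearMap.coe_restrictScalars',
    ContinuousLinearMap.smulRight_apply, ContinuousLinearMap.one_apply, smul_eq_mul]
  ring

lemma wirtZbar_cexp (hg : DifferentiableAt ℝ g z) :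
    wirtZbar (fun w => Complex.exp (g w)) z = Complex.exp (g z) * wirtZbar g z := by
  unfold wirtZbar
  rw [(cexp_comp_hasFDerivAt hg).fderiv]
  simp only [ContinuousLinearMap.comp_apply, ContinuousLinearMap.coe_restrictScalars',
    ContinuousLinearMap.smulRight_apply, ContinuousLinearMap.one_apply, smul_eq_mul]
  ring

lemma hasDerivAt_ray {t : ℝ} (hg : DifferentiableAt ℝ g ((t : ℝ) • z)) :
    HasDerivAt (fun s : ℝ => g ((s : ℝ) • z))
      (z * wirtZ g ((t : ℝ) • z) + (starRingEnd ℂ) z * wirtZbar g ((t : ℝ) • z)) t := by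
  have hγ : HasDerivAt (fun s : ℝ => (s : ℝ) • z) z t := by
    simpa using (hasDerivAt_id t).smul_const z
  have h := hg.hasFDerivAt.comp_hasDerivAt t hγ
  rwa [fderiv_eq_wirt hg z] at h

end wirtlemmas

lemma vanish_of_linear_system {N : ℕ} (h : Fin N → ℂ → ℂ)
    (hdiff : ∀ k, Differentiable ℝ (h k))
    (A B : Fin N → Fin N → ℂ → ℂ)
    (hA : ∀ k l, Continuous (A k l)) (hB : ∀ k l, Continuous (B k l))
    (heq : ∀ k z, wirtZ (h k) z = ∑ l, A k l z * h l z)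
    (heqb : ∀ k z, wirtZbar (h k) z = ∑ l, B k l z * h l z)
    (h0 : ∀ k, h k 0 = 0) (z : ℂ) (k : Fin N) : h k z = 0 := by
  classical
  set H : ℝ → (Fin N → ℂ) := fun t k => h k ((t : ℝ) • z) with hH
  set C : ℝ → Fin N → Fin N → ℂ :=
    fun t k l => z * A k l ((t : ℝ) • z) + (starRingEnd ℂ) z * B k l ((t : ℝ) • z) with hC
  have hCcont : Continuous C := by
    apply continuous_pi; intro k; apply continuous_pi; intro l
    have hsm : Continuous fun t : ℝ => (t : ℝ) • z := (continuous_id.smul continuous_const)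
    exact (continuous_const.mul ((hA k l).comp hsm)).add
      (continuous_const.mul ((hB k l).comp hsm))
  set H' : ℝ → (Fin N → ℂ) := fun t k => ∑ l, C t k l * H t l with hH'
  have hder : ∀ t : ℝ, HasDerivAt H (H' t) t := by
    intro t
    rw [hasDerivAt_pi]
    intro k
    have := hasDerivAt_ray (g := h k) (z := z) (t := t) ((hdiff k) _)
    rw [heq, heqb] at this
    convert this using 1
    case e'_4 => rfl
    simp only [hH', hC, hH, Finset.mul_sum]
    rw [← Finset.sum_add_distrib]
    congr 1; funext l; ring
  -- bound on C over Icc 0 1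
  obtain ⟨M, hM⟩ : ∃ M, ∀ t ∈ Set.Icc (0:ℝ) 1, ‖C t‖ ≤ M :=
    (isCompact_Icc).exists_bound_of_continuousOn hCcont.continuousOn
  set K : ℝ := (N : ℝ) * max M 0 with hK
  have hKnn : 0 ≤ K := mul_nonneg (Nat.cast_nonneg _) (le_max_right _ _)
  have hbound : ∀ t ∈ Set.Ico (0:ℝ) 1, ‖H' t‖ ≤ K * ‖H t‖ + 0 := by
    intro t ht
    rw [add_zero]
    have hKH : 0 ≤ K * ‖H t‖ := mul_nonneg hKnn (norm_nonneg _)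
    rw [pi_norm_le_iff_of_nonneg hKH]
    intro k
    calc ‖∑ l, C t k l * H t l‖ ≤ ∑ l, ‖C t k l * H t l‖ := norm_sum_le _ _
      _ ≤ ∑ l : Fin N, max M 0 * ‖H t‖ := by
          apply Finset.sum_le_sum
          intro l _
          rw [norm_mul]
          apply mul_le_mul _ (norm_le_pi_norm _ _) (norm_nonneg _) (le_max_right _ _)
          calc ‖C t k l‖ ≤ ‖C t k‖ := norm_le_pi_norm _ _
            _ ≤ ‖C t‖ := norm_le_pi_norm _ _
            _ ≤ M := hM t (Set.mem_Icc.mpr ⟨ht.1, le_of_lt ht.2⟩)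
            _ ≤ max M 0 := le_max_left _ _
      _ = K * ‖H t‖ := by rw [Finset.sum_const, Finset.card_univ]; simp [hK]; ring
  have hcont : ContinuousOn H (Set.Icc 0 1) := by
    intro t _
    exact ((hder t).continuousAt).continuousWithinAt
  have h00 : ‖H 0‖ ≤ 0 := by
    have : H 0 = 0 := by
      funext k; simp only [hH]; rw [show ((0:ℝ) • z) = 0 by simp]; exact h0 k
    simp [this]
  have := norm_le_gronwallBound_of_norm_deriv_right_le hcont
    (fun t ht => (hder t).hasDerivWithinAt) h00
    hbound 1 (Set.mem_Icc.mpr ⟨zero_le_one, le_refl 1⟩)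
  rw [gronwallBound_ε0_δ0] at this
  have hH1 : H 1 = 0 := by
    have := le_antisymm this (norm_nonneg _)
    exact norm_eq_zero.mp this
  have := congrFun hH1 k
  simpa [hH] using this

end wirtAPI

section geometry

/-- All components smooth. -/
def SmV {m : ℕ} (g : ℂ → Fin m → ℂ) : Prop := ∀ i, ContDiff ℝ ∞ (fun w => g w i)

namespace SmV

variable {m : ℕ} {g : ℂ → Fin m → ℂ}

lemma wz (h : SmV g) : SmV (WZ g) := fun i => (h i).wirtZ_smooth

lemma wzb (h : SmV g) : SmV (WZb g) := fun i => (h i).wirtZbar_smooth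

lemma conj (h : SmV g) : SmV (fun z => conjV (g z)) := fun i =>
  (Complex.conjCLE : ℂ →L[ℝ] ℂ).contDiff.comp (h i)

lemma diff (h : SmV g) (i : Fin m) : Differentiable ℝ (fun w => g w i) :=
  (h i).differentiable (by simp)

end SmV

lemma smv_Fc {m : ℕ} {f : ℂ → Fin m → ℝ} (hf : ContDiff ℝ (⊤ : ℕ∞) f) : SmV (Fc f) := by
  intro i
  have h1 : ContDiff ℝ ∞ fun w => f w i := (contDiff_pi.mp (hf.of_le (by simp))) i
  exact Complex.ofRealCLM.contDiff.comp h1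

section pairs

variable {m : ℕ}

lemma pairC_comm (u v : Fin m → ℂ) : pairC u v = pairC v u := by
  unfold pairC; simp [mul_comm]

lemma conj_pairC (u v : Fin m → ℂ) :
    (starRingEnd ℂ) (pairC u v) = pairC (conjV u) (conjV v) := by
  unfold pairC conjV; rw [map_sum]; simp

lemma conjV_conjV (u : Fin m → ℂ) : conjV (conjV u) = u := by
  funext i; simp [conjV]

lemma conjV_Fc {f : ℂ → Fin m → ℝ} (z : ℂ) : conjV (Fc f z) = Fc f z := by
  funext i; simp [conjV, Fc, cV, Complex.conj_ofReal]

lemma wirtZ_pairC {u v : ℂ → Fin m → ℂ} (hu : SmV u) (hv : SmV v) (z : ℂ) :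
    wirtZ (fun w => pairC (u w) (v w)) z = pairC (WZ u z) (v z) + pairC (u z) (WZ v z) := by
  unfold pairC
  rw [wirtZ_sum Finset.univ _ (fun i _ => ((hu.diff i) z).fun_mul ((hv.diff i) z))]
  rw [← Finset.sum_add_distrib]
  congr 1; funext i
  exact wirtZ_mul ((hu.diff i) z) ((hv.diff i) z)

lemma wirtZbar_pairC {u v : ℂ → Fin m → ℂ} (hu : SmV u) (hv : SmV v) (z : ℂ) :
    wirtZbar (fun w => pairC (u w) (v w)) z
      = pairC (WZb u z) (v z) + pairC (u z) (WZb v z) := by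
  unfold pairC
  rw [wirtZbar_sum Finset.univ _ (fun i _ => ((hu.diff i) z).fun_mul ((hv.diff i) z))]
  rw [← Finset.sum_add_distrib]
  congr 1; funext i
  exact wirtZbar_mul ((hu.diff i) z) ((hv.diff i) z)

lemma pairC_smul_left (c : ℂ) (u v : Fin m → ℂ) :
    pairC (fun i => c * u i) v = c * pairC u v := by
  unfold pairC; rw [Finset.mul_sum]; congr 1; funext i; ring

end pairs

end geometry

section structureEqs

variable {m : ℕ} {f : ℂ → Fin m → ℝ} {ρ : ℂ → ℝ}

lemma sm_ofReal_comp {u : ℂ → ℝ} (hu : ContDiff ℝ (⊤ : ℕ∞) u) :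
    ContDiff ℝ ∞ (fun w => ((u w : ℝ) : ℂ)) :=
  Complex.ofRealCLM.contDiff.comp (hu.of_le (by simp))

lemma real_wirtZbar {u : ℂ → ℝ} (hu : ContDiff ℝ (⊤ : ℕ∞) u) (z : ℂ) :
    wirtZbar (fun w => ((u w : ℝ) : ℂ)) z
      = (starRingEnd ℂ) (wirtZ (fun w => ((u w : ℝ) : ℂ)) z) := by
  have h : (fun w => ((u w : ℝ) : ℂ))
      = fun w => (starRingEnd ℂ) (((u w : ℝ) : ℂ)) := by
    funext w; rw [Complex.conj_ofReal]
  conv_lhs => rw [h]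
  exact wirtZbar_conj

lemma sm_dZ (hρ : ContDiff ℝ (⊤ : ℕ∞) ρ) : ContDiff ℝ ∞ (dZ ρ) :=
  (sm_ofReal_comp hρ).wirtZ_smooth

lemma sm_R2 (hρ : ContDiff ℝ (⊤ : ℕ∞) ρ) :
    ContDiff ℝ ∞ (fun z => ((Real.exp (2 * ρ z) : ℝ) : ℂ)) := by
  have : ContDiff ℝ (⊤ : ℕ∞) (fun z => Real.exp (2 * ρ z)) :=
    Real.contDiff_exp.comp ((contDiff_const (c := (2:ℝ))).mul hρ)
  exact sm_ofReal_comp this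

lemma sm_Rm2 (hρ : ContDiff ℝ (⊤ : ℕ∞) ρ) :
    ContDiff ℝ ∞ (fun z => ((Real.exp (-2 * ρ z) : ℝ) : ℂ)) := by
  have : ContDiff ℝ (⊤ : ℕ∞) (fun z => Real.exp (-2 * ρ z)) :=
    Real.contDiff_exp.comp ((contDiff_const (c := (-2:ℝ))).mul hρ)
  exact sm_ofReal_comp this

lemma wirtZ_R2 (hρ : ContDiff ℝ (⊤ : ℕ∞) ρ) (z : ℂ) :
    wirtZ (fun w => ((Real.exp (2 * ρ w) : ℝ) : ℂ)) z
      = 2 * dZ ρ z * ((Real.exp (2 * ρ z) : ℝ) : ℂ) := by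
  have h : (fun w => ((Real.exp (2 * ρ w) : ℝ) : ℂ))
      = fun w => Complex.exp ((2 : ℂ) * ((ρ w : ℝ) : ℂ)) := by
    funext w
    rw [show (2 : ℂ) * ((ρ w : ℝ) : ℂ) = (((2 * ρ w : ℝ)) : ℂ) by push_cast; ring]
    rw [Complex.ofReal_exp]
  rw [h]
  have hd : DifferentiableAt ℝ (fun w => (2 : ℂ) * ((ρ w : ℝ) : ℂ)) z :=
    (((sm_ofReal_comp hρ).differentiable (by simp)) z).const_mul _
  rw [wirtZ_cexp hd]
  rw [wirtZ_const_mul 2 (((sm_ofReal_comp hρ).differentiable (by simp)) z)]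
  rw [show (2 : ℂ) * ((ρ z : ℝ) : ℂ) = (((2 * ρ z : ℝ)) : ℂ) by push_cast; ring]
  rw [Complex.ofReal_exp]
  unfold dZ
  ring

lemma wirtZbar_R2 (hρ : ContDiff ℝ (⊤ : ℕ∞) ρ) (z : ℂ) :
    wirtZbar (fun w => ((Real.exp (2 * ρ w) : ℝ) : ℂ)) z
      = 2 * (starRingEnd ℂ) (dZ ρ z) * ((Real.exp (2 * ρ z) : ℝ) : ℂ) := by
  have : ContDiff ℝ (⊤ : ℕ∞) (fun z => Real.exp (2 * ρ z)) :=
    Real.contDiff_exp.comp ((contDiff_const (c := (2:ℝ))).mul hρ)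
  rw [real_wirtZbar this z, wirtZ_R2 hρ z]
  rw [map_mul, map_mul, Complex.conj_ofReal]
  congr 1
  simp [Complex.ext_iff]

-- structure equations
lemma Fzb_eq_conj (hf1 : ContDiff ℝ (⊤ : ℕ∞) f) (z : ℂ) (i : Fin m) :
    WZb (Fc f) z i = (starRingEnd ℂ) (WZ (Fc f) z i) := by
  show wirtZbar (fun w => Fc f w i) z = (starRingEnd ℂ) (wirtZ (fun w => Fc f w i) z)
  exact real_wirtZbar (contDiff_pi.mp hf1 i) z

lemma conjV_Fz (hf1 : ContDiff ℝ (⊤ : ℕ∞) f) (z : ℂ) :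
    conjV (WZ (Fc f) z) = WZb (Fc f) z := by
  funext i
  rw [Fzb_eq_conj hf1 z i]
  rfl

lemma WZ_WZb_comm (hf1 : ContDiff ℝ (⊤ : ℕ∞) f) (z : ℂ) (i : Fin m) :
    WZ (WZb (Fc f)) z i = WZb (WZ (Fc f)) z i := by
  show wirtZ (wirtZbar (fun w => Fc f w i)) z = wirtZbar (wirtZ (fun w => Fc f w i)) z
  exact (wirt_swap (smv_Fc hf1 i) z).symm

lemma WZ_WZ_eq (z : ℂ) (i : Fin m) :
    WZ (WZ (Fc f)) z i = Hopf f ρ z i + 2 * dZ ρ z * WZ (Fc f) z i := by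
  unfold Hopf; ring

lemma WZb_WZb_eq (hf1 : ContDiff ℝ (⊤ : ℕ∞) f) (z : ℂ) (i : Fin m) :
    WZb (WZb (Fc f)) z i = (starRingEnd ℂ) (WZ (WZ (Fc f)) z i) := by
  have h : (fun w => WZb (Fc f) w i) = fun w => (starRingEnd ℂ) (WZ (Fc f) w i) := by
    funext w; exact Fzb_eq_conj hf1 w i
  show wirtZbar (fun w => WZb (Fc f) w i) z = _
  rw [h]
  exact wirtZbar_conj

end structureEqs

section mainGeom

variable {m : ℕ} {f : ℂ → Fin m → ℝ} {ρ : ℂ → ℝ}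

lemma smv_Hopf (hf1 : ContDiff ℝ (⊤ : ℕ∞) f) (hρ : ContDiff ℝ (⊤ : ℕ∞) ρ) : SmV (Hopf f ρ) := by
  intro i
  have h1 : ContDiff ℝ ∞ (fun w => WZ (WZ (Fc f)) w i) := (smv_Fc hf1).wz.wz i
  have h2 : ContDiff ℝ ∞ (fun w => 2 * dZ ρ w * WZ (Fc f) w i) :=
    ((contDiff_const.mul (sm_dZ hρ)).mul ((smv_Fc hf1).wz i))
  exact h1.sub h2

lemma codazzi (hf : IsConfMinImm f ρ) (z : ℂ) (i : Fin m) :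
    WZb (Hopf f ρ) z i
      = (-(1/2 : ℂ) * ((Real.exp (2 * ρ z) : ℝ) : ℂ) - 2 * wirtZbar (dZ ρ) z)
        * WZ (Fc f) z i := by
  obtain ⟨hf1, hρ, h3, h4, h5, h6⟩ := hf
  have sF := smv_Fc hf1
  have sdZ : ContDiff ℝ ∞ (dZ ρ) := sm_dZ hρ
  have ddZ : DifferentiableAt ℝ (dZ ρ) z := (sdZ.differentiable (by simp)) z
  show wirtZbar (fun w => WZ (WZ (Fc f)) w i - 2 * dZ ρ w * WZ (Fc f) w i) z = _
  rw [wirtZbar_sub ((sF.wz.wz.diff i) z)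
    (((ddZ.const_mul 2)).fun_mul ((sF.wz.diff i) z))]
  rw [wirtZbar_mul (ddZ.const_mul 2) ((sF.wz.diff i) z)]
  rw [wirtZbar_const_mul 2 ddZ]
  have t1 : wirtZbar (fun w => WZ (WZ (Fc f)) w i) z
      = wirtZ (fun w => WZb (WZ (Fc f)) w i) z := wirt_swap (sF.wz i) z
  rw [t1]
  have t2 : (fun w => WZb (WZ (Fc f)) w i)
      = fun w => (-(1/2) : ℂ) * (((Real.exp (2 * ρ w) : ℝ) : ℂ) * Fc f w i) := by
    funext w; rw [h6 w i]; ring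
  rw [t2]
  rw [wirtZ_const_mul (-(1/2))
    ((((sm_R2 hρ).differentiable (by simp)) z).fun_mul ((sF.diff i) z))]
  rw [wirtZ_mul (((sm_R2 hρ).differentiable (by simp)) z) ((sF.diff i) z)]
  rw [wirtZ_R2 hρ z]
  have t3 : wirtZbar (fun w => WZ (Fc f) w i) z = WZb (WZ (Fc f)) z i := rfl
  rw [t3, h6 z i]
  have t4 : wirtZ (fun w => Fc f w i) z = WZ (Fc f) z i := rfl
  rw [t4]
  ring

lemma conjOm_WZ (hf : IsConfMinImm f ρ) (z : ℂ) (i : Fin m) :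
    WZ (fun w => conjV (Hopf f ρ w)) z i
      = (starRingEnd ℂ) (WZb (Hopf f ρ) z i) := by
  show wirtZ (fun w => (starRingEnd ℂ) (Hopf f ρ w i)) z = _
  exact wirtZ_conj

-- pairing identities
lemma pair_F_F (hf : IsConfMinImm f ρ) (z : ℂ) :
    pairC (Fc f z) (Fc f z) = 1 := by
  have h3 := hf.2.2.1 z
  unfold pairC Fc cV
  have : ∑ i, (f z i : ℂ) * (f z i : ℂ) = ((∑ i, f z i ^ 2 : ℝ) : ℂ) := by
    push_cast
    exact Finset.sum_congr rfl fun i _ => by ring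
  rw [this, h3, Complex.ofReal_one]

lemma pair_F_Fz (hf : IsConfMinImm f ρ) (z : ℂ) :
    pairC (Fc f z) (WZ (Fc f) z) = 0 := by
  have sF := smv_Fc hf.1
  have hd := wirtZ_pairC sF sF z
  have hc : (fun w => pairC (Fc f w) (Fc f w)) = fun _ => (1 : ℂ) :=
    funext fun w => pair_F_F hf w
  rw [hc, wirtZ_const] at hd
  rw [pairC_comm (WZ (Fc f) z) (Fc f z)] at hd
  exact add_self_eq_zero.mp hd.symm

lemma pair_F_Fzb (hf : IsConfMinImm f ρ) (z : ℂ) :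
    pairC (Fc f z) (WZb (Fc f) z) = 0 := by
  rw [← conjV_Fc (f := f) z, ← conjV_Fz hf.1 z, ← conj_pairC]
  rw [pair_F_Fz hf z, map_zero]

lemma pair_Fzz_F (hf : IsConfMinImm f ρ) (z : ℂ) :
    pairC (WZ (WZ (Fc f)) z) (Fc f z) = 0 := by
  have sF := smv_Fc hf.1
  have hd := wirtZ_pairC sF.wz sF z
  have hc : (fun w => pairC (WZ (Fc f) w) (Fc f w)) = fun _ => (0 : ℂ) :=
    funext fun w => by rw [pairC_comm]; exact pair_F_Fz hf w
  rw [hc, wirtZ_const] at hd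
  have h4 := hf.2.2.2.1 z
  linear_combination -hd - h4

lemma pair_Fzz_Fz (hf : IsConfMinImm f ρ) (z : ℂ) :
    pairC (WZ (WZ (Fc f)) z) (WZ (Fc f) z) = 0 := by
  have sF := smv_Fc hf.1
  have hd := wirtZ_pairC sF.wz sF.wz z
  have hc : (fun w => pairC (WZ (Fc f) w) (WZ (Fc f) w)) = fun _ => (0 : ℂ) :=
    funext fun w => hf.2.2.2.1 w
  rw [hc, wirtZ_const] at hd
  rw [pairC_comm (WZ (WZ (Fc f)) z) (WZ (Fc f) z)] at hd
  rw [pairC_comm]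
  exact add_self_eq_zero.mp hd.symm

lemma pair_Fz_Fzb (hf : IsConfMinImm f ρ) (z : ℂ) :
    pairC (WZ (Fc f) z) (WZb (Fc f) z)
      = (1/2 : ℂ) * ((Real.exp (2 * ρ z) : ℝ) : ℂ) := by
  rw [← conjV_Fz hf.1 z]
  exact hf.2.2.2.2.1 z

lemma pair_Fzz_Fzb (hf : IsConfMinImm f ρ) (z : ℂ) :
    pairC (WZ (WZ (Fc f)) z) (WZb (Fc f) z)
      = dZ ρ z * ((Real.exp (2 * ρ z) : ℝ) : ℂ) := by
  have sF := smv_Fc hf.1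
  have hd := wirtZ_pairC sF.wz sF.wzb z
  have hc : (fun w => pairC (WZ (Fc f) w) (WZb (Fc f) w))
      = fun w => (1/2 : ℂ) * ((Real.exp (2 * ρ w) : ℝ) : ℂ) :=
    funext fun w => pair_Fz_Fzb hf w
  rw [hc] at hd
  rw [wirtZ_const_mul (1/2) (((sm_R2 hf.2.1).differentiable (by simp)) z),
    wirtZ_R2 hf.2.1 z] at hd
  have hWZb : pairC (WZ (Fc f) z) (WZ (WZb (Fc f)) z) = 0 := by
    have e : WZ (WZb (Fc f)) z = fun i =>
        (-(1/2 : ℂ) * ((Real.exp (2 * ρ z) : ℝ) : ℂ)) * Fc f z i := by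
      funext i; rw [WZ_WZb_comm hf.1 z i, hf.2.2.2.2.2 z i]
    rw [e, pairC_comm, pairC_smul_left, pair_F_Fz hf z, mul_zero]
  rw [hWZb] at hd
  linear_combination -hd

lemma pairC_hopf_left (z : ℂ) (v : Fin m → ℂ) :
    pairC (Hopf f ρ z) v
      = pairC (WZ (WZ (Fc f)) z) v - 2 * dZ ρ z * pairC (WZ (Fc f) z) v := by
  unfold pairC Hopf
  rw [Finset.mul_sum, ← Finset.sum_sub_distrib]
  congr 1; funext i; ring

lemma pair_Om_F (hf : IsConfMinImm f ρ) (z : ℂ) :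
    pairC (Hopf f ρ z) (Fc f z) = 0 := by
  rw [pairC_hopf_left, pair_Fzz_F hf z, pairC_comm, pair_F_Fz hf z]; ring

lemma pair_Om_Fz (hf : IsConfMinImm f ρ) (z : ℂ) :
    pairC (Hopf f ρ z) (WZ (Fc f) z) = 0 := by
  rw [pairC_hopf_left, pair_Fzz_Fz hf z, hf.2.2.2.1 z]; ring

lemma pair_Om_Fzb (hf : IsConfMinImm f ρ) (z : ℂ) :
    pairC (Hopf f ρ z) (WZb (Fc f) z) = 0 := by
  rw [pairC_hopf_left, pair_Fzz_Fzb hf z, pair_Fz_Fzb hf z]; ring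

lemma pair_Omb_F (hf : IsConfMinImm f ρ) (z : ℂ) :
    pairC (conjV (Hopf f ρ z)) (Fc f z) = 0 := by
  rw [← conjV_Fc (f := f) z, ← conj_pairC, pair_Om_F hf z, map_zero]

lemma pair_Omb_Fz (hf : IsConfMinImm f ρ) (z : ℂ) :
    pairC (conjV (Hopf f ρ z)) (WZ (Fc f) z) = 0 := by
  have : WZ (Fc f) z = conjV (WZb (Fc f) z) := by
    rw [← conjV_Fz hf.1 z, conjV_conjV]
  rw [this, ← conj_pairC, pair_Om_Fzb hf z, map_zero]

lemma pair_Omb_Fzb (hf : IsConfMinImm f ρ) (z : ℂ) :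
    pairC (conjV (Hopf f ρ z)) (WZb (Fc f) z) = 0 := by
  rw [← conjV_Fz hf.1 z, ← conj_pairC, pair_Om_Fz hf z, map_zero]

lemma pair_self_conj (u : Fin m → ℂ) :
    pairC u (conjV u) = ((∑ i, Complex.normSq (u i) : ℝ) : ℂ) := by
  unfold pairC conjV
  push_cast
  exact Finset.sum_congr rfl fun i _ => (Complex.mul_conj (u i))

lemma pair_self_conj_ne_zero {u : Fin m → ℂ} (hu : u ≠ 0) :
    pairC u (conjV u) ≠ 0 := by
  rw [pair_self_conj]
  intro h
  rw [Complex.ofReal_eq_zero] at h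
  apply hu
  funext i
  have hnn : ∀ j ∈ Finset.univ, (0:ℝ) ≤ Complex.normSq (u j) := fun j _ => Complex.normSq_nonneg _
  have := (Finset.sum_eq_zero_iff_of_nonneg hnn).mp h i (Finset.mem_univ i)
  exact Complex.normSq_eq_zero.mp this
end mainGeom

section fullness

lemma exists_ann {n N : ℕ} (hN : N < n + 1) (v : Fin N → Fin (n + 1) → ℝ) :
    ∃ w : Fin (n + 1) → ℝ, w ≠ 0 ∧ ∀ j, ∑ i, w i * v j i = 0 := by
  classical
  let ψ : (Fin (n + 1) → ℝ) →ₗ[ℝ] (Fin N → ℝ) :=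
    { toFun := fun x j => ∑ i, x i * v j i
      map_add' := by
        intro x y; funext j
        simp [add_mul, Finset.sum_add_distrib]
      map_smul' := by
        intro a x; funext j
        simp [Finset.mul_sum, mul_assoc] }
  by_contra hcon
  push_neg at hcon
  have hinj : Function.Injective ψ := by
    rw [injective_iff_map_eq_zero]
    intro w hw
    by_contra hne
    obtain ⟨j, hj⟩ := hcon w hne
    exact hj (congrFun hw j)
  have hle := LinearMap.finrank_le_finrank_of_injective hinj
  simp only [Module.finrank_pi, Fintype.card_fin] at hle
  omega

lemma trap_full {n : ℕ} {f : ℂ → Fin (n + 1) → ℝ}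
    (hfull : ∀ V : Submodule ℝ (Fin (n + 1) → ℝ), (∀ z : ℂ, f z ∈ V) → V = ⊤)
    {N : ℕ} (g : Fin N → ℂ → Fin (n + 1) → ℂ) (k0 : Fin N) (hg0 : g k0 = Fc f)
    (hsm : ∀ k i, Differentiable ℝ (fun w => g k w i))
    (A B : ℂ → Fin N → Fin N → ℂ)
    (hA : ∀ k l, Continuous (fun z => A z k l)) (hB : ∀ k l, Continuous (fun z => B z k l))
    (hWZ : ∀ k z i, WZ (g k) z i = ∑ l, A z k l * g l z i)
    (hWZb : ∀ k z i, WZb (g k) z i = ∑ l, B z k l * g l z i)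
    (w : Fin (n + 1) → ℝ) (hw0 : ∀ k, ∑ i, (w i : ℂ) * g k 0 i = 0) (hwne : w ≠ 0) :
    False := by
  classical
  set h : Fin N → ℂ → ℂ := fun k z => ∑ i, (w i : ℂ) * g k z i with hh
  have hdiff : ∀ k, Differentiable ℝ (h k) := by
    intro k
    apply Differentiable.fun_sum
    intro i _
    exact (hsm k i).const_mul _
  have heq : ∀ k z, wirtZ (h k) z = ∑ l, A z k l * h l z := by
    intro k z
    rw [wirtZ_sum Finset.univ _ (fun i _ => ((hsm k i) z).const_mul _)]
    have : ∀ i, wirtZ (fun w' => (w i : ℂ) * g k w' i) z = (w i : ℂ) * WZ (g k) z i :=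
      fun i => wirtZ_const_mul _ ((hsm k i) z)
    calc ∑ i, wirtZ (fun w' => (w i : ℂ) * g k w' i) z
        = ∑ i, (w i : ℂ) * (∑ l, A z k l * g l z i) := by
          refine Finset.sum_congr rfl fun i _ => ?_
          rw [this i, hWZ k z i]
      _ = ∑ l, A z k l * h l z := by
          simp only [hh, Finset.mul_sum]
          rw [Finset.sum_comm]
          refine Finset.sum_congr rfl fun l _ => ?_
          refine Finset.sum_congr rfl fun i _ => ?_
          ring
  have heqb : ∀ k z, wirtZbar (h k) z = ∑ l, B z k l * h l z := by
    intro k z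
    rw [wirtZbar_sum Finset.univ _ (fun i _ => ((hsm k i) z).const_mul _)]
    have : ∀ i, wirtZbar (fun w' => (w i : ℂ) * g k w' i) z = (w i : ℂ) * WZb (g k) z i :=
      fun i => wirtZbar_const_mul _ ((hsm k i) z)
    calc ∑ i, wirtZbar (fun w' => (w i : ℂ) * g k w' i) z
        = ∑ i, (w i : ℂ) * (∑ l, B z k l * g l z i) := by
          refine Finset.sum_congr rfl fun i _ => ?_
          rw [this i, hWZb k z i]
      _ = ∑ l, B z k l * h l z := by
          simp only [hh, Finset.mul_sum]
          rw [Finset.sum_comm]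
          refine Finset.sum_congr rfl fun l _ => ?_
          refine Finset.sum_congr rfl fun i _ => ?_
          ring
  have hvan := vanish_of_linear_system h hdiff (fun k l z => A z k l) (fun k l z => B z k l)
    hA hB heq heqb hw0
  -- the functional
  let φ : (Fin (n + 1) → ℝ) →ₗ[ℝ] ℝ :=
    { toFun := fun x => ∑ i, w i * x i
      map_add' := by intro x y; simp [mul_add, Finset.sum_add_distrib]
      map_smul' := by
        intro a x
        simp only [smul_eq_mul, RingHom.id_apply, Pi.smul_apply]
        rw [Finset.mul_sum]
        exact Finset.sum_congr rfl fun i _ => by ring }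
  have hker : ∀ z : ℂ, f z ∈ LinearMap.ker φ := by
    intro z
    have this0 := hvan z k0
    simp only [hh] at this0
    rw [hg0] at this0
    have this := this0
    have hre : ((∑ i, w i * f z i : ℝ) : ℂ) = 0 := by
      push_cast
      rw [← this]
      rfl
    rw [LinearMap.mem_ker]
    exact_mod_cast hre
  have htop := hfull _ hker
  have hw : φ w = 0 := by
    have : w ∈ LinearMap.ker φ := htop ▸ Submodule.mem_top
    exact this
  have : ∑ i, w i * w i = 0 := hw
  apply hwne
  funext i
  have hnn : ∀ j ∈ Finset.univ, (0:ℝ) ≤ w j * w j := fun j _ => mul_self_nonneg _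
  have := (Finset.sum_eq_zero_iff_of_nonneg hnn).mp this i (Finset.mem_univ i)
  exact mul_self_eq_zero.mp this

end fullness

section Esection

variable {m : ℕ}

/-- Tangential coefficient `α = ⟨E, f⟩`. -/
def alphaE (f : ℂ → Fin m → ℝ) (E : Fin m → ℝ) : ℂ → ℂ := fun z => pairC (cV E) (Fc f z)

/-- Tangential coefficient `p = 2 e^{-2ρ} ⟨E, f_z⟩`. -/
def pE (f : ℂ → Fin m → ℝ) (ρ : ℂ → ℝ) (E : Fin m → ℝ) : ℂ → ℂ :=
  fun z => 2 * ((Real.exp (-2 * ρ z) : ℝ) : ℂ) * pairC (cV E) (WZ (Fc f) z)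

/-- Tangential coefficient `q = 2 e^{-2ρ} ⟨E, f_z̄⟩`. -/
def qE (f : ℂ → Fin m → ℝ) (ρ : ℂ → ℝ) (E : Fin m → ℝ) : ℂ → ℂ :=
  fun z => 2 * ((Real.exp (-2 * ρ z) : ℝ) : ℂ) * pairC (cV E) (WZb (Fc f) z)

/-- Codazzi coefficient `μ`. -/
def muC (ρ : ℂ → ℝ) : ℂ → ℂ :=
  fun z => -(1/2 : ℂ) * ((Real.exp (2 * ρ z) : ℝ) : ℂ) - 2 * wirtZbar (dZ ρ) z

variable {f : ℂ → Fin m → ℝ} {ρ : ℂ → ℝ} {E : Fin m → ℝ} {c : ℂ}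

lemma sm_pairC_const {g : ℂ → Fin m → ℂ} (hg : SmV g) (u : Fin m → ℂ) :
    ContDiff ℝ ∞ (fun z => pairC u (g z)) := by
  unfold pairC
  exact ContDiff.sum fun i _ => contDiff_const.mul (hg i)

lemma sm_alphaE (hf1 : ContDiff ℝ (⊤ : ℕ∞) f) : ContDiff ℝ ∞ (alphaE f E) :=
  sm_pairC_const (smv_Fc hf1) _

lemma sm_pE (hf1 : ContDiff ℝ (⊤ : ℕ∞) f) (hρ : ContDiff ℝ (⊤ : ℕ∞) ρ) : ContDiff ℝ ∞ (pE f ρ E) :=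
  (contDiff_const.mul (sm_Rm2 hρ)).mul (sm_pairC_const (smv_Fc hf1).wz _)

lemma sm_qE (hf1 : ContDiff ℝ (⊤ : ℕ∞) f) (hρ : ContDiff ℝ (⊤ : ℕ∞) ρ) : ContDiff ℝ ∞ (qE f ρ E) :=
  (contDiff_const.mul (sm_Rm2 hρ)).mul (sm_pairC_const (smv_Fc hf1).wzb _)

lemma sm_muC (hρ : ContDiff ℝ (⊤ : ℕ∞) ρ) : ContDiff ℝ ∞ (muC ρ) :=
  (contDiff_const.mul (sm_R2 hρ)).sub (contDiff_const.mul (sm_dZ hρ).wirtZbar_smooth)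

lemma codazzi' (hf : IsConfMinImm f ρ) (z : ℂ) (i : Fin m) :
    WZb (Hopf f ρ) z i = muC ρ z * WZ (Fc f) z i := codazzi hf z i

lemma Edecomp
    (hE : ∀ (z : ℂ) (i : Fin m),
      c * Hopf f ρ z i + (starRingEnd ℂ) c * (starRingEnd ℂ) (Hopf f ρ z i)
        + Eperp f ρ E z i = 0) (z : ℂ) (i : Fin m) :
    (E i : ℂ) = alphaE f E z * Fc f z i + pE f ρ E z * WZb (Fc f) z i
      + qE f ρ E z * WZ (Fc f) z i - c * Hopf f ρ z i
      - (starRingEnd ℂ) c * conjV (Hopf f ρ z) i := by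
  have h := hE z i
  unfold Eperp at h
  unfold alphaE pE qE conjV
  linear_combination h

lemma keyWZ (hf : IsConfMinImm f ρ)
    (hE : ∀ (z : ℂ) (i : Fin m),
      c * Hopf f ρ z i + (starRingEnd ℂ) c * (starRingEnd ℂ) (Hopf f ρ z i)
        + Eperp f ρ E z i = 0) (z : ℂ) (i : Fin m) :
    (0 : ℂ) = wirtZ (alphaE f E) z * Fc f z i + alphaE f E z * WZ (Fc f) z i
      + wirtZ (pE f ρ E) z * WZb (Fc f) z i
      + pE f ρ E z * (-(1/2 : ℂ) * ((Real.exp (2 * ρ z) : ℝ) : ℂ) * Fc f z i)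
      + wirtZ (qE f ρ E) z * WZ (Fc f) z i
      + qE f ρ E z * (Hopf f ρ z i + 2 * dZ ρ z * WZ (Fc f) z i)
      - c * WZ (Hopf f ρ) z i
      - (starRingEnd ℂ) c * ((starRingEnd ℂ) (muC ρ z) * WZb (Fc f) z i) := by
  have hf1 := hf.1
  have hρ := hf.2.1
  have sF := smv_Fc hf1
  have dα : DifferentiableAt ℝ (alphaE f E) z := ((sm_alphaE hf1).differentiable (by simp)) z
  have dp : DifferentiableAt ℝ (pE f ρ E) z := ((sm_pE hf1 hρ).differentiable (by simp)) z
  have dq : DifferentiableAt ℝ (qE f ρ E) z := ((sm_qE hf1 hρ).differentiable (by simp)) z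
  have dF : DifferentiableAt ℝ (fun w => Fc f w i) z := (sF.diff i) z
  have dFz : DifferentiableAt ℝ (fun w => WZ (Fc f) w i) z := (sF.wz.diff i) z
  have dFzb : DifferentiableAt ℝ (fun w => WZb (Fc f) w i) z := (sF.wzb.diff i) z
  have dOm : DifferentiableAt ℝ (fun w => Hopf f ρ w i) z :=
    ((smv_Hopf hf1 hρ).diff i) z
  have dOmb : DifferentiableAt ℝ (fun w => conjV (Hopf f ρ w) i) z :=
    (((smv_Hopf hf1 hρ).conj).diff i) z
  have hconst : (fun _ : ℂ => ((E i : ℝ) : ℂ))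
      = fun w => alphaE f E w * Fc f w i + pE f ρ E w * WZb (Fc f) w i
        + qE f ρ E w * WZ (Fc f) w i - c * Hopf f ρ w i
        - (starRingEnd ℂ) c * conjV (Hopf f ρ w) i :=
    funext fun w => Edecomp hE w i
  have h0 : (0 : ℂ) = wirtZ (fun w => alphaE f E w * Fc f w i
      + pE f ρ E w * WZb (Fc f) w i + qE f ρ E w * WZ (Fc f) w i
      - c * Hopf f ρ w i - (starRingEnd ℂ) c * conjV (Hopf f ρ w) i) z := by
    rw [← hconst, wirtZ_const]
  rw [wirtZ_sub (by
        exact (((dα.mul dF).add (dp.mul dFzb)).add (dq.mul dFz)).sub (dOm.const_mul c))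
      (dOmb.const_mul _)] at h0
  rw [wirtZ_sub ((((dα.fun_mul dF).fun_add (dp.fun_mul dFzb)).fun_add (dq.fun_mul dFz))) (dOm.const_mul c)] at h0
  rw [wirtZ_add (((dα.fun_mul dF).fun_add (dp.fun_mul dFzb))) (dq.fun_mul dFz)] at h0
  rw [wirtZ_add ((dα.fun_mul dF)) (dp.fun_mul dFzb)] at h0
  rw [wirtZ_mul dα dF, wirtZ_mul dp dFzb, wirtZ_mul dq dFz] at h0
  rw [wirtZ_const_mul c dOm, wirtZ_const_mul _ dOmb] at h0
  -- identify the structural derivatives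
  have e1 : wirtZ (fun w => Fc f w i) z = WZ (Fc f) z i := rfl
  have e2 : wirtZ (fun w => WZb (Fc f) w i) z
      = -(1/2 : ℂ) * ((Real.exp (2 * ρ z) : ℝ) : ℂ) * Fc f z i := by
    have : wirtZ (fun w => WZb (Fc f) w i) z = WZ (WZb (Fc f)) z i := rfl
    rw [this, WZ_WZb_comm hf1 z i]
    exact hf.2.2.2.2.2 z i
  have e3 : wirtZ (fun w => WZ (Fc f) w i) z
      = Hopf f ρ z i + 2 * dZ ρ z * WZ (Fc f) z i := by
    have : wirtZ (fun w => WZ (Fc f) w i) z = WZ (WZ (Fc f)) z i := rfl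
    rw [this]; exact WZ_WZ_eq z i
  have e4 : wirtZ (fun w => Hopf f ρ w i) z = WZ (Hopf f ρ) z i := rfl
  have e5 : wirtZ (fun w => conjV (Hopf f ρ w) i) z
      = (starRingEnd ℂ) (muC ρ z) * WZb (Fc f) z i := by
    have h1 : wirtZ (fun w => (starRingEnd ℂ) (Hopf f ρ w i)) z
        = (starRingEnd ℂ) (wirtZbar (fun w => Hopf f ρ w i) z) := wirtZ_conj
    have h2 : wirtZbar (fun w => Hopf f ρ w i) z = WZb (Hopf f ρ) z i := rfl
    show wirtZ (fun w => (starRingEnd ℂ) (Hopf f ρ w i)) z = _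
    rw [h1, h2, codazzi' hf z i, map_mul, ← Fzb_eq_conj hf1 z i]
  rw [e1, e2, e3, e4, e5] at h0
  linear_combination h0

lemma cWZ_Hopf (hf : IsConfMinImm f ρ)
    (hE : ∀ (z : ℂ) (i : Fin m),
      c * Hopf f ρ z i + (starRingEnd ℂ) c * (starRingEnd ℂ) (Hopf f ρ z i)
        + Eperp f ρ E z i = 0) (z : ℂ) (i : Fin m) :
    c * WZ (Hopf f ρ) z i
      = (wirtZ (alphaE f E) z
          - (1/2 : ℂ) * pE f ρ E z * ((Real.exp (2 * ρ z) : ℝ) : ℂ)) * Fc f z i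
      + (alphaE f E z + wirtZ (qE f ρ E) z + 2 * dZ ρ z * qE f ρ E z) * WZ (Fc f) z i
      + (wirtZ (pE f ρ E) z
          - (starRingEnd ℂ) c * (starRingEnd ℂ) (muC ρ z)) * WZb (Fc f) z i
      + qE f ρ E z * Hopf f ρ z i := by
  linear_combination keyWZ hf hE z i

end Esection

section Ebar

variable {m : ℕ} {f : ℂ → Fin m → ℝ} {ρ : ℂ → ℝ} {E : Fin m → ℝ} {c : ℂ}

lemma keyWZb (hf : IsConfMinImm f ρ)
    (hE : ∀ (z : ℂ) (i : Fin m),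
      c * Hopf f ρ z i + (starRingEnd ℂ) c * (starRingEnd ℂ) (Hopf f ρ z i)
        + Eperp f ρ E z i = 0) (z : ℂ) (i : Fin m) :
    (0 : ℂ) = wirtZbar (alphaE f E) z * Fc f z i + alphaE f E z * WZb (Fc f) z i
      + wirtZbar (pE f ρ E) z * WZb (Fc f) z i
      + pE f ρ E z * (conjV (Hopf f ρ z) i
          + 2 * (starRingEnd ℂ) (dZ ρ z) * WZb (Fc f) z i)
      + wirtZbar (qE f ρ E) z * WZ (Fc f) z i
      + qE f ρ E z * (-(1/2 : ℂ) * ((Real.exp (2 * ρ z) : ℝ) : ℂ) * Fc f z i)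
      - c * (muC ρ z * WZ (Fc f) z i)
      - (starRingEnd ℂ) c * (starRingEnd ℂ) (WZ (Hopf f ρ) z i) := by
  have hf1 := hf.1
  have hρ := hf.2.1
  have sF := smv_Fc hf1
  have dα : DifferentiableAt ℝ (alphaE f E) z := ((sm_alphaE hf1).differentiable (by simp)) z
  have dp : DifferentiableAt ℝ (pE f ρ E) z := ((sm_pE hf1 hρ).differentiable (by simp)) z
  have dq : DifferentiableAt ℝ (qE f ρ E) z := ((sm_qE hf1 hρ).differentiable (by simp)) z
  have dF : DifferentiableAt ℝ (fun w => Fc f w i) z := (sF.diff i) z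
  have dFz : DifferentiableAt ℝ (fun w => WZ (Fc f) w i) z := (sF.wz.diff i) z
  have dFzb : DifferentiableAt ℝ (fun w => WZb (Fc f) w i) z := (sF.wzb.diff i) z
  have dOm : DifferentiableAt ℝ (fun w => Hopf f ρ w i) z :=
    ((smv_Hopf hf1 hρ).diff i) z
  have dOmb : DifferentiableAt ℝ (fun w => conjV (Hopf f ρ w) i) z :=
    (((smv_Hopf hf1 hρ).conj).diff i) z
  have hconst : (fun _ : ℂ => ((E i : ℝ) : ℂ))
      = fun w => alphaE f E w * Fc f w i + pE f ρ E w * WZb (Fc f) w i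
        + qE f ρ E w * WZ (Fc f) w i - c * Hopf f ρ w i
        - (starRingEnd ℂ) c * conjV (Hopf f ρ w) i :=
    funext fun w => Edecomp hE w i
  have h0 : (0 : ℂ) = wirtZbar (fun w => alphaE f E w * Fc f w i
      + pE f ρ E w * WZb (Fc f) w i + qE f ρ E w * WZ (Fc f) w i
      - c * Hopf f ρ w i - (starRingEnd ℂ) c * conjV (Hopf f ρ w) i) z := by
    rw [← hconst, wirtZbar_const]
  rw [wirtZbar_sub (by
        exact (((dα.mul dF).add (dp.mul dFzb)).add (dq.mul dFz)).sub (dOm.const_mul c))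
      (dOmb.const_mul _)] at h0
  rw [wirtZbar_sub ((((dα.fun_mul dF).fun_add (dp.fun_mul dFzb)).fun_add (dq.fun_mul dFz))) (dOm.const_mul c)] at h0
  rw [wirtZbar_add (((dα.fun_mul dF).fun_add (dp.fun_mul dFzb))) (dq.fun_mul dFz)] at h0
  rw [wirtZbar_add ((dα.fun_mul dF)) (dp.fun_mul dFzb)] at h0
  rw [wirtZbar_mul dα dF, wirtZbar_mul dp dFzb, wirtZbar_mul dq dFz] at h0
  rw [wirtZbar_const_mul c dOm, wirtZbar_const_mul _ dOmb] at h0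
  have e1 : wirtZbar (fun w => Fc f w i) z = WZb (Fc f) z i := rfl
  have e2 : wirtZbar (fun w => WZb (Fc f) w i) z
      = conjV (Hopf f ρ z) i + 2 * (starRingEnd ℂ) (dZ ρ z) * WZb (Fc f) z i := by
    have h1 : wirtZbar (fun w => WZb (Fc f) w i) z = WZb (WZb (Fc f)) z i := rfl
    rw [h1, WZb_WZb_eq hf1 z i, WZ_WZ_eq z i, map_add, map_mul, map_mul]
    rw [← Fzb_eq_conj hf1 z i]
    have : (starRingEnd ℂ) (2 : ℂ) = 2 := by simp [Complex.ext_iff]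
    rw [this]
    rfl
  have e3 : wirtZbar (fun w => WZ (Fc f) w i) z
      = -(1/2 : ℂ) * ((Real.exp (2 * ρ z) : ℝ) : ℂ) * Fc f z i := by
    have h1 : wirtZbar (fun w => WZ (Fc f) w i) z = WZb (WZ (Fc f)) z i := rfl
    rw [h1]; exact hf.2.2.2.2.2 z i
  have e4 : wirtZbar (fun w => Hopf f ρ w i) z = muC ρ z * WZ (Fc f) z i := by
    have h1 : wirtZbar (fun w => Hopf f ρ w i) z = WZb (Hopf f ρ) z i := rfl
    rw [h1]; exact codazzi' hf z i
  have e5 : wirtZbar (fun w => conjV (Hopf f ρ w) i) z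
      = (starRingEnd ℂ) (WZ (Hopf f ρ) z i) := by
    show wirtZbar (fun w => (starRingEnd ℂ) (Hopf f ρ w i)) z = _
    rw [wirtZbar_conj]
    rfl
  rw [e1, e2, e3, e4, e5] at h0
  linear_combination h0

end Ebar

section castHelpers

variable {m : ℕ}

lemma sum_castC_zero {w v : Fin m → ℝ} (h : ∑ i, w i * v i = 0) :
    ∑ i, (w i : ℂ) * (v i : ℂ) = 0 := by
  have : ((∑ i, w i * v i : ℝ) : ℂ) = 0 := by rw [h]; simp
  rw [← this]
  push_cast
  rfl

lemma sum_mulC_zero {w : Fin m → ℝ} {u : Fin m → ℂ}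
    (hre : ∑ i, w i * (u i).re = 0) (him : ∑ i, w i * (u i).im = 0) :
    ∑ i, (w i : ℂ) * u i = 0 := by
  apply Complex.ext
  · rw [Complex.re_sum]
    simp only [Complex.mul_re, Complex.ofReal_re, Complex.ofReal_im, zero_mul, sub_zero]
    simpa using hre
  · rw [Complex.im_sum]
    simp only [Complex.mul_im, Complex.ofReal_re, Complex.ofReal_im, zero_mul, add_zero]
    simpa using him

lemma sum_mul_conj_zero {w : Fin m → ℝ} {u : Fin m → ℂ}
    (h : ∑ i, (w i : ℂ) * u i = 0) :
    ∑ i, (w i : ℂ) * (starRingEnd ℂ) (u i) = 0 := by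
  have h2 := congrArg (starRingEnd ℂ) h
  rw [map_sum, map_zero] at h2
  rw [← h2]
  exact Finset.sum_congr rfl fun i _ => by rw [map_mul, Complex.conj_ofReal]

end castHelpers

section hopfNonzero

lemma hopf_not_ident_zero {n : ℕ} (hn3 : 3 < n + 1)
    {f : ℂ → Fin (n + 1) → ℝ} {ρ : ℂ → ℝ} (hf : IsConfMinImm f ρ)
    (hfull : ∀ V : Submodule ℝ (Fin (n + 1) → ℝ), (∀ z : ℂ, f z ∈ V) → V = ⊤) :
    ∃ z₀, Hopf f ρ z₀ ≠ 0 := by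
  by_contra hcon
  push_neg at hcon
  have hO : ∀ z i, Hopf f ρ z i = 0 := fun z i => by
    have := hcon z; exact congrFun this i
  have hf1 := hf.1
  have hρ := hf.2.1
  have sF := smv_Fc hf1
  set g : Fin 3 → ℂ → Fin (n + 1) → ℂ := ![Fc f, WZ (Fc f), WZb (Fc f)] with hg
  set A : ℂ → Fin 3 → Fin 3 → ℂ := fun z =>
    ![![0, 1, 0],
      ![0, 2 * dZ ρ z, 0],
      ![-(1/2 : ℂ) * ((Real.exp (2 * ρ z) : ℝ) : ℂ), 0, 0]] with hA
  set B : ℂ → Fin 3 → Fin 3 → ℂ := fun z =>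
    ![![0, 0, 1],
      ![-(1/2 : ℂ) * ((Real.exp (2 * ρ z) : ℝ) : ℂ), 0, 0],
      ![0, 0, 2 * (starRingEnd ℂ) (dZ ρ z)]] with hB
  -- annihilating vector
  obtain ⟨w, hwne, hw⟩ := exists_ann hn3
    ![fun i => f 0 i, fun i => (WZ (Fc f) 0 i).re, fun i => (WZ (Fc f) 0 i).im]
  have hw0 : ∑ i, (w i : ℂ) * Fc f 0 i = 0 := by
    have := hw 0
    simp only [Matrix.cons_val_zero] at this
    exact sum_castC_zero this
  have hw1 : ∑ i, (w i : ℂ) * WZ (Fc f) 0 i = 0 := by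
    have h1 := hw 1
    have h2 := hw 2
    simp only [Matrix.cons_val_one, Matrix.head_cons, Matrix.cons_val_two, Matrix.tail_cons]
      at h1 h2
    exact sum_mulC_zero h1 h2
  have hw2 : ∑ i, (w i : ℂ) * WZb (Fc f) 0 i = 0 := by
    calc ∑ i, (w i : ℂ) * WZb (Fc f) 0 i
        = ∑ i, (w i : ℂ) * (starRingEnd ℂ) (WZ (Fc f) 0 i) :=
          Finset.sum_congr rfl fun i _ => by rw [Fzb_eq_conj hf1 0 i]
      _ = 0 := sum_mul_conj_zero hw1
  apply trap_full hfull g 0 (by simp [hg]) ?_ A B ?_ ?_ ?_ ?_ w ?_ hwne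
  · -- differentiability
    intro k i
    fin_cases k
    · exact sF.diff i
    · exact sF.wz.diff i
    · exact sF.wzb.diff i
  · intro k l
    fin_cases k <;> fin_cases l <;>
      simp only [hA, Matrix.cons_val_zero, Matrix.cons_val_one, Matrix.head_cons,
        Matrix.cons_val_two, Matrix.tail_cons] <;>
      first
        | exact continuous_const
        | exact continuous_const.mul (sm_dZ hρ).continuous
        | exact continuous_const.mul (sm_R2 hρ).continuous
  · intro k l
    fin_cases k <;> fin_cases l <;>
      simp only [hB, Matrix.cons_val_zero, Matrix.cons_val_one, Matrix.head_cons,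
        Matrix.cons_val_two, Matrix.tail_cons] <;>
      first
        | exact continuous_const
        | exact continuous_const.mul (sm_R2 hρ).continuous
        | exact continuous_const.mul
            (Complex.conjCLE.continuous.comp (sm_dZ hρ).continuous)
  · -- WZ equations
    intro k z i
    fin_cases k
    · show WZ (Fc f) z i = _
      simp [hg, hA, Fin.sum_univ_three]
    · show WZ (WZ (Fc f)) z i = _
      rw [WZ_WZ_eq z i, hO z i]
      simp [hg, hA, Fin.sum_univ_three]
      try ring
    · show WZ (WZb (Fc f)) z i = _
      rw [WZ_WZb_comm hf1 z i, hf.2.2.2.2.2 z i]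
      simp [hg, hA, Fin.sum_univ_three]
      try ring
  · -- WZb equations
    intro k z i
    fin_cases k
    · show WZb (Fc f) z i = _
      simp [hg, hB, Fin.sum_univ_three]
    · show WZb (WZ (Fc f)) z i = _
      rw [hf.2.2.2.2.2 z i]
      simp [hg, hB, Fin.sum_univ_three]
      try ring
    · show WZb (WZb (Fc f)) z i = _
      rw [WZb_WZb_eq hf1 z i, WZ_WZ_eq z i, hO z i]
      rw [map_add, map_zero, map_mul, map_mul, ← Fzb_eq_conj hf1 z i]
      rw [show (starRingEnd ℂ) (2 : ℂ) = 2 by simp [Complex.ext_iff]]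
      simp [hg, hB, Fin.sum_univ_three]
      try ring
  · -- initial conditions
    intro k
    fin_cases k
    · exact hw0
    · exact hw1
    · exact hw2

end hopfNonzero

section caseCnonzero

lemma c_ne_zero_contradiction {n : ℕ} (hn5 : 5 < n + 1)
    {f : ℂ → Fin (n + 1) → ℝ} {ρ : ℂ → ℝ} (hf : IsConfMinImm f ρ)
    (hfull : ∀ V : Submodule ℝ (Fin (n + 1) → ℝ), (∀ z : ℂ, f z ∈ V) → V = ⊤)
    {c : ℂ} {E : Fin (n + 1) → ℝ}
    (hE : ∀ (z : ℂ) (i : Fin (n + 1)),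
      c * Hopf f ρ z i + (starRingEnd ℂ) c * (starRingEnd ℂ) (Hopf f ρ z i)
        + Eperp f ρ E z i = 0)
    (hc : c ≠ 0) : False := by
  have hf1 := hf.1
  have hρ := hf.2.1
  have sF := smv_Fc hf1
  have sOm := smv_Hopf hf1 hρ
  -- coefficient functions
  set q0 : ℂ → ℂ := fun z => c⁻¹ * (wirtZ (alphaE f E) z
    - (1/2 : ℂ) * pE f ρ E z * ((Real.exp (2 * ρ z) : ℝ) : ℂ)) with hq0
  set q1 : ℂ → ℂ := fun z => c⁻¹ * (alphaE f E z + wirtZ (qE f ρ E) z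
    + 2 * dZ ρ z * qE f ρ E z) with hq1
  set q2 : ℂ → ℂ := fun z => c⁻¹ * (wirtZ (pE f ρ E) z
    - (starRingEnd ℂ) c * (starRingEnd ℂ) (muC ρ z)) with hq2
  set q3 : ℂ → ℂ := fun z => c⁻¹ * qE f ρ E z with hq3
  have hWZ3 : ∀ z i, WZ (Hopf f ρ) z i
      = q0 z * Fc f z i + q1 z * WZ (Fc f) z i + q2 z * WZb (Fc f) z i
        + q3 z * Hopf f ρ z i := by
    intro z i
    have h := cWZ_Hopf hf hE z i
    have h2 : WZ (Hopf f ρ) z i = c⁻¹ * (c * WZ (Hopf f ρ) z i) := by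
      rw [← mul_assoc, inv_mul_cancel₀ hc, one_mul]
    rw [h2, h, hq0, hq1, hq2, hq3]
    ring
  have hWZb4 : ∀ z i, WZb (fun w => conjV (Hopf f ρ w)) z i
      = (starRingEnd ℂ) (q0 z) * Fc f z i
        + (starRingEnd ℂ) (q2 z) * WZ (Fc f) z i
        + (starRingEnd ℂ) (q1 z) * WZb (Fc f) z i
        + (starRingEnd ℂ) (q3 z) * conjV (Hopf f ρ z) i := by
    intro z i
    have e : WZb (fun w => conjV (Hopf f ρ w)) z i
        = (starRingEnd ℂ) (WZ (Hopf f ρ) z i) := by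
      show wirtZbar (fun w => (starRingEnd ℂ) (Hopf f ρ w i)) z = _
      rw [wirtZbar_conj]; rfl
    rw [e, hWZ3 z i]
    simp only [map_add, map_mul, conjV]
    rw [show (starRingEnd ℂ) (Fc f z i) = Fc f z i from Complex.conj_ofReal _]
    rw [show (starRingEnd ℂ) (WZ (Fc f) z i) = WZb (Fc f) z i from (Fzb_eq_conj hf1 z i).symm]
    rw [show (starRingEnd ℂ) (WZb (Fc f) z i) = WZ (Fc f) z i by
      rw [Fzb_eq_conj hf1 z i, Complex.conj_conj]]
    ring
  set g : Fin 5 → ℂ → Fin (n + 1) → ℂ :=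
    ![Fc f, WZ (Fc f), WZb (Fc f), Hopf f ρ, fun w => conjV (Hopf f ρ w)] with hg
  set A : ℂ → Fin 5 → Fin 5 → ℂ := fun z =>
    ![![0, 1, 0, 0, 0],
      ![0, 2 * dZ ρ z, 0, 1, 0],
      ![-(1/2 : ℂ) * ((Real.exp (2 * ρ z) : ℝ) : ℂ), 0, 0, 0, 0],
      ![q0 z, q1 z, q2 z, q3 z, 0],
      ![0, 0, (starRingEnd ℂ) (muC ρ z), 0, 0]] with hA
  set B : ℂ → Fin 5 → Fin 5 → ℂ := fun z =>
    ![![0, 0, 1, 0, 0],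
      ![-(1/2 : ℂ) * ((Real.exp (2 * ρ z) : ℝ) : ℂ), 0, 0, 0, 0],
      ![0, 0, 2 * (starRingEnd ℂ) (dZ ρ z), 0, 1],
      ![0, muC ρ z, 0, 0, 0],
      ![(starRingEnd ℂ) (q0 z), (starRingEnd ℂ) (q2 z), (starRingEnd ℂ) (q1 z), 0,
        (starRingEnd ℂ) (q3 z)]] with hB
  -- continuity facts
  have ccj : ∀ {u : ℂ → ℂ}, Continuous u → Continuous (fun z => (starRingEnd ℂ) (u z)) :=
    fun hu => Complex.continuous_conj.comp hu
  have cdZ : Continuous (dZ ρ) := (sm_dZ hρ).continuous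
  have cR2 : Continuous (fun z => ((Real.exp (2 * ρ z) : ℝ) : ℂ)) := (sm_R2 hρ).continuous
  have cmu : Continuous (muC ρ) := (sm_muC hρ).continuous
  have cq0 : Continuous q0 := by
    apply Continuous.mul continuous_const
    exact ((sm_alphaE hf1).wirtZ_smooth.continuous).sub
      ((continuous_const.mul (sm_pE hf1 hρ).continuous).mul cR2)
  have cq1 : Continuous q1 := by
    apply Continuous.mul continuous_const
    exact (((sm_alphaE hf1).continuous).add ((sm_qE hf1 hρ).wirtZ_smooth.continuous)).add
      ((continuous_const.mul cdZ).mul (sm_qE hf1 hρ).continuous)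
  have cq2 : Continuous q2 := by
    apply Continuous.mul continuous_const
    exact ((sm_pE hf1 hρ).wirtZ_smooth.continuous).sub (continuous_const.mul (ccj cmu))
  have cq3 : Continuous q3 := continuous_const.mul (sm_qE hf1 hρ).continuous
  -- annihilating vector
  obtain ⟨w, hwne, hw⟩ := exists_ann hn5
    ![fun i => f 0 i, fun i => (WZ (Fc f) 0 i).re, fun i => (WZ (Fc f) 0 i).im,
      fun i => (Hopf f ρ 0 i).re, fun i => (Hopf f ρ 0 i).im]
  have hw0 : ∑ i, (w i : ℂ) * Fc f 0 i = 0 := by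
    have := hw 0
    simp only [Matrix.cons_val_zero] at this
    exact sum_castC_zero this
  have hw1 : ∑ i, (w i : ℂ) * WZ (Fc f) 0 i = 0 := by
    have h1 := hw 1
    have h2 := hw 2
    simp only [Matrix.cons_val_one, Matrix.head_cons, Matrix.cons_val_two,
      Matrix.tail_cons] at h1 h2
    exact sum_mulC_zero h1 h2
  have hw2 : ∑ i, (w i : ℂ) * WZb (Fc f) 0 i = 0 := by
    calc ∑ i, (w i : ℂ) * WZb (Fc f) 0 i
        = ∑ i, (w i : ℂ) * (starRingEnd ℂ) (WZ (Fc f) 0 i) :=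
          Finset.sum_congr rfl fun i _ => by rw [Fzb_eq_conj hf1 0 i]
      _ = 0 := sum_mul_conj_zero hw1
  have hw3 : ∑ i, (w i : ℂ) * Hopf f ρ 0 i = 0 := by
    have h1 := hw 3
    have h2 := hw 4
    simp only [Matrix.cons_val_three, Matrix.cons_val_four, Matrix.head_cons,
      Matrix.tail_cons, Matrix.cons_val_succ] at h1 h2
    exact sum_mulC_zero h1 h2
  have hw4 : ∑ i, (w i : ℂ) * conjV (Hopf f ρ 0) i = 0 := sum_mul_conj_zero hw3
  apply trap_full hfull g 0 (by simp [hg]) ?_ A B ?_ ?_ ?_ ?_ w ?_ hwne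
  · intro k i
    fin_cases k
    · exact sF.diff i
    · exact sF.wz.diff i
    · exact sF.wzb.diff i
    · exact sOm.diff i
    · exact sOm.conj.diff i
  · intro k l
    fin_cases k <;> fin_cases l <;>
      simp only [hA, Matrix.cons_val_zero, Matrix.cons_val_one, Matrix.head_cons,
        Matrix.cons_val_two, Matrix.tail_cons, Matrix.cons_val_three,
        Matrix.cons_val_four, Matrix.cons_val_succ] <;>
      first
        | exact continuous_const
        | exact continuous_const.mul cdZ
        | exact continuous_const.mul cR2
        | exact cq0
        | exact cq1
        | exact cq2
        | exact cq3
        | exact ccj cmu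
  · intro k l
    fin_cases k <;> fin_cases l <;>
      simp only [hB, Matrix.cons_val_zero, Matrix.cons_val_one, Matrix.head_cons,
        Matrix.cons_val_two, Matrix.tail_cons, Matrix.cons_val_three,
        Matrix.cons_val_four, Matrix.cons_val_succ] <;>
      first
        | exact continuous_const
        | exact continuous_const.mul cR2
        | exact continuous_const.mul (ccj cdZ)
        | exact cmu
        | exact ccj cq0
        | exact ccj cq1
        | exact ccj cq2
        | exact ccj cq3
  · -- WZ equations
    intro k z i
    fin_cases k
    · show WZ (Fc f) z i = _
      simp [hg, hA, Fin.sum_univ_five]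
    · show WZ (WZ (Fc f)) z i = _
      rw [WZ_WZ_eq z i]
      simp [hg, hA, Fin.sum_univ_five]
      try ring
    · show WZ (WZb (Fc f)) z i = _
      rw [WZ_WZb_comm hf1 z i, hf.2.2.2.2.2 z i]
      simp [hg, hA, Fin.sum_univ_five]
      try ring
    · show WZ (Hopf f ρ) z i = _
      rw [hWZ3 z i]
      simp [hg, hA, Fin.sum_univ_five]
      try ring
    · show WZ (fun w => conjV (Hopf f ρ w)) z i = _
      have e : WZ (fun w => conjV (Hopf f ρ w)) z i
          = (starRingEnd ℂ) (WZb (Hopf f ρ) z i) := by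
        show wirtZ (fun w => (starRingEnd ℂ) (Hopf f ρ w i)) z = _
        rw [wirtZ_conj]; rfl
      rw [e, codazzi' hf z i, map_mul, ← Fzb_eq_conj hf1 z i]
      simp [hg, hA, Fin.sum_univ_five]
      try ring
  · -- WZb equations
    intro k z i
    fin_cases k
    · show WZb (Fc f) z i = _
      simp [hg, hB, Fin.sum_univ_five]
    · show WZb (WZ (Fc f)) z i = _
      rw [hf.2.2.2.2.2 z i]
      simp [hg, hB, Fin.sum_univ_five]
      try ring
    · show WZb (WZb (Fc f)) z i = _
      rw [WZb_WZb_eq hf1 z i, WZ_WZ_eq z i]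
      rw [map_add, map_mul, map_mul, ← Fzb_eq_conj hf1 z i]
      rw [show (starRingEnd ℂ) (2 : ℂ) = 2 by simp [Complex.ext_iff]]
      simp [hg, hB, Fin.sum_univ_five]
      simp only [conjV]
      try ring
    · show WZb (Hopf f ρ) z i = _
      rw [codazzi' hf z i]
      simp [hg, hB, Fin.sum_univ_five]
      try ring
    · show WZb (fun w => conjV (Hopf f ρ w)) z i = _
      rw [hWZb4 z i]
      simp [hg, hB, Fin.sum_univ_five]
      try ring
  · intro k
    fin_cases k
    · exact hw0
    · exact hw1
    · exact hw2
    · exact hw3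
    · exact hw4

end caseCnonzero

section caseCzero

lemma pair_of_pointwise {m : ℕ} {A1 A2 A3 A4 : ℂ} {u1 u2 u3 u4 v : Fin m → ℂ}
    (h : ∀ i, (0 : ℂ) = A1 * u1 i + A2 * u2 i + A3 * u3 i + A4 * u4 i) :
    (0 : ℂ) = A1 * pairC u1 v + A2 * pairC u2 v + A3 * pairC u3 v + A4 * pairC u4 v := by
  unfold pairC
  rw [Finset.mul_sum, Finset.mul_sum, Finset.mul_sum, Finset.mul_sum]
  rw [← Finset.sum_add_distrib, ← Finset.sum_add_distrib, ← Finset.sum_add_distrib]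
  have : ∀ i ∈ Finset.univ, (A1 * (u1 i * v i) + A2 * (u2 i * v i))
      + A3 * (u3 i * v i) + A4 * (u4 i * v i) = 0 := by
    intro i _
    have := h i
    linear_combination -(v i) * this
  rw [Finset.sum_congr rfl this, Finset.sum_const, smul_zero]

lemma pair_Fzb_Fzb {m : ℕ} {f : ℂ → Fin m → ℝ} {ρ : ℂ → ℝ}
    (hf : IsConfMinImm f ρ) (z : ℂ) :
    pairC (WZb (Fc f) z) (WZb (Fc f) z) = 0 := by
  rw [← conjV_Fz hf.1 z, ← conj_pairC, hf.2.2.2.1 z, map_zero]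

lemma c_zero_E_zero {n : ℕ} (hn3 : 3 < n + 1)
    {f : ℂ → Fin (n + 1) → ℝ} {ρ : ℂ → ℝ} (hf : IsConfMinImm f ρ)
    (hfull : ∀ V : Submodule ℝ (Fin (n + 1) → ℝ), (∀ z : ℂ, f z ∈ V) → V = ⊤)
    {E : Fin (n + 1) → ℝ}
    (hE : ∀ (z : ℂ) (i : Fin (n + 1)),
      (0 : ℂ) * Hopf f ρ z i + (starRingEnd ℂ) (0 : ℂ) * (starRingEnd ℂ) (Hopf f ρ z i)
        + Eperp f ρ E z i = 0) :
    E = 0 := by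
  have hf1 := hf.1
  have hρ := hf.2.1
  obtain ⟨z₀, hz₀⟩ := hopf_not_ident_zero hn3 hf hfull
  set U : Set ℂ := {z | Hopf f ρ z ≠ 0} with hU
  have hUopen : IsOpen U := by
    have hcont : Continuous (fun z => Hopf f ρ z) :=
      continuous_pi fun i => ((smv_Hopf hf1 hρ) i).continuous
    exact isOpen_compl_singleton.preimage hcont
  have hz₀U : z₀ ∈ U := hz₀
  -- pointwise combinations
  have keyA : ∀ z i, (0 : ℂ)
      = (wirtZ (alphaE f E) z
          - (1/2 : ℂ) * pE f ρ E z * ((Real.exp (2 * ρ z) : ℝ) : ℂ)) * Fc f z i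
      + (alphaE f E z + wirtZ (qE f ρ E) z + 2 * dZ ρ z * qE f ρ E z) * WZ (Fc f) z i
      + (wirtZ (pE f ρ E) z) * WZb (Fc f) z i
      + (qE f ρ E z) * Hopf f ρ z i := by
    intro z i
    have h := keyWZ hf hE z i
    simp only [zero_mul, map_zero, sub_zero] at h
    linear_combination h
  have keyB : ∀ z i, (0 : ℂ)
      = (wirtZbar (alphaE f E) z
          - (1/2 : ℂ) * qE f ρ E z * ((Real.exp (2 * ρ z) : ℝ) : ℂ)) * Fc f z i
      + (wirtZbar (qE f ρ E) z) * WZ (Fc f) z i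
      + (alphaE f E z + wirtZbar (pE f ρ E) z
          + 2 * (starRingEnd ℂ) (dZ ρ z) * pE f ρ E z) * WZb (Fc f) z i
      + (pE f ρ E z) * conjV (Hopf f ρ z) i := by
    intro z i
    have h := keyWZb hf hE z i
    simp only [zero_mul, map_zero, sub_zero] at h
    linear_combination h
  -- q = 0 on U
  have hq : ∀ z ∈ U, qE f ρ E z = 0 := by
    intro z hz
    have h := pair_of_pointwise (v := conjV (Hopf f ρ z)) (fun i => keyA z i)
    rw [pairC_comm (Fc f z) _, pair_Omb_F hf z] at h
    rw [pairC_comm (WZ (Fc f) z) _, pair_Omb_Fz hf z] at h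
    rw [pairC_comm (WZb (Fc f) z) _, pair_Omb_Fzb hf z] at h
    have hne := pair_self_conj_ne_zero (u := Hopf f ρ z) hz
    simp only [mul_zero, zero_add, add_zero] at h
    exact (mul_eq_zero.mp h.symm).resolve_right hne
  -- p = 0 on U
  have hp : ∀ z ∈ U, pE f ρ E z = 0 := by
    intro z hz
    have h := pair_of_pointwise (v := Hopf f ρ z) (fun i => keyB z i)
    rw [pairC_comm (Fc f z) _, pair_Om_F hf z] at h
    rw [pairC_comm (WZ (Fc f) z) _, pair_Om_Fz hf z] at h
    rw [pairC_comm (WZb (Fc f) z) _, pair_Om_Fzb hf z] at h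
    rw [pairC_comm (conjV (Hopf f ρ z)) _] at h
    have hne := pair_self_conj_ne_zero (u := Hopf f ρ z) hz
    simp only [mul_zero, zero_add, add_zero] at h
    exact (mul_eq_zero.mp h.symm).resolve_right hne
  -- wirtZ q vanishes on U
  have hwq : wirtZ (qE f ρ E) z₀ = 0 := by
    have hev : qE f ρ E =ᶠ[nhds z₀] (fun _ => (0 : ℂ)) := by
      filter_upwards [hUopen.mem_nhds hz₀U] with z hz
      exact hq z hz
    rw [wirtZ_congr hev, wirtZ_const]
  -- α = 0 at z₀
  have hα : alphaE f E z₀ = 0 := by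
    have h := pair_of_pointwise (v := WZb (Fc f) z₀) (fun i => keyA z₀ i)
    rw [pair_F_Fzb hf z₀, pair_Fz_Fzb hf z₀, pair_Fzb_Fzb hf z₀,
      pair_Om_Fzb hf z₀] at h
    rw [hq z₀ hz₀U, hwq] at h
    have hR2 : ((Real.exp (2 * ρ z₀) : ℝ) : ℂ) ≠ 0 :=
      Complex.ofReal_ne_zero.mpr (Real.exp_ne_zero _)
    have h2 : alphaE f E z₀ * ((1/2 : ℂ) * ((Real.exp (2 * ρ z₀) : ℝ) : ℂ)) = 0 := by
      linear_combination -h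
    rcases mul_eq_zero.mp h2 with h3 | h3
    · exact h3
    · exact absurd h3 (by
        intro hcon
        rcases mul_eq_zero.mp hcon with h4 | h4
        · norm_num at h4
        · exact hR2 h4)
  -- conclude E = 0
  funext i
  have h := Edecomp hE z₀ i
  rw [hα, hq z₀ hz₀U, hp z₀ hz₀U] at h
  simp only [zero_mul, map_zero, mul_zero, add_zero, sub_zero, zero_add,
    zero_sub, neg_zero] at h
  have : E i = 0 := by exact_mod_cast h
  simp [this]

end caseCzero

section finalPrep

variable {m : ℕ}

lemma pairC_cV_single (j : Fin m) (u : Fin m → ℂ) :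
    pairC (cV (Pi.single j 1)) u = u j := by
  unfold pairC cV
  rw [Finset.sum_eq_single j]
  · simp
  · intro b _ hb
    rw [Pi.single_eq_of_ne hb]
    simp
  · intro h; exact absurd (Finset.mem_univ j) h

lemma Eperp_comb (f : ℂ → Fin m → ℝ) (ρ : ℂ → ℝ) (E : Fin m → ℝ) (z : ℂ) (i : Fin m) :
    Eperp f ρ E z i = ∑ j, (E j : ℂ) * Eperp f ρ (Pi.single j 1) z i := by
  have expand : ∀ j : Fin m, Eperp f ρ (Pi.single j 1) z i
      = (Complex.ofReal ((Pi.single j 1 : Fin m → ℝ) i)) - Fc f z j * Fc f z i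
        - 2 * ((Real.exp (-2 * ρ z) : ℝ) : ℂ) * WZ (Fc f) z j * WZb (Fc f) z i
        - 2 * ((Real.exp (-2 * ρ z) : ℝ) : ℂ) * WZb (Fc f) z j * WZ (Fc f) z i := by
    intro j
    unfold Eperp
    rw [pairC_cV_single, pairC_cV_single, pairC_cV_single]
  rw [Finset.sum_congr rfl (fun j _ => by rw [expand j])]
  unfold Eperp
  have e1 : ∑ j, (E j : ℂ) * ((Complex.ofReal ((Pi.single j 1 : Fin m → ℝ) i)) - Fc f z j * Fc f z i
        - 2 * ((Real.exp (-2 * ρ z) : ℝ) : ℂ) * WZ (Fc f) z j * WZb (Fc f) z i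
        - 2 * ((Real.exp (-2 * ρ z) : ℝ) : ℂ) * WZb (Fc f) z j * WZ (Fc f) z i)
      = (∑ j, (E j : ℂ) * (Complex.ofReal ((Pi.single j 1 : Fin m → ℝ) i)))
        - (∑ j, (E j : ℂ) * Fc f z j) * Fc f z i
        - 2 * ((Real.exp (-2 * ρ z) : ℝ) : ℂ)
            * (∑ j, (E j : ℂ) * WZ (Fc f) z j) * WZb (Fc f) z i
        - 2 * ((Real.exp (-2 * ρ z) : ℝ) : ℂ)
            * (∑ j, (E j : ℂ) * WZb (Fc f) z j) * WZ (Fc f) z i := by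
    simp only [Finset.mul_sum, Finset.sum_mul, ← Finset.sum_sub_distrib]
    exact Finset.sum_congr rfl fun j _ => by ring
  rw [e1]
  have e2 : ∑ j, (E j : ℂ) * (Complex.ofReal ((Pi.single j 1 : Fin m → ℝ) i)) = ((E i : ℝ) : ℂ) := by
    rw [Finset.sum_eq_single i]
    · simp
    · intro b _ hb
      rw [Pi.single_eq_of_ne (Ne.symm hb)]
      simp
    · intro h; exact absurd (Finset.mem_univ i) h
  rw [e2]
  have e3 : ∀ u : Fin m → ℂ, pairC (cV E) u = ∑ j, (E j : ℂ) * u j := fun u => rfl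
  rw [← e3, ← e3, ← e3]

lemma cconj_comb (a b : ℝ) (om : ℂ) :
    ((a : ℂ) - (b : ℂ) * Complex.I) / 2 * om
      + (starRingEnd ℂ) (((a : ℂ) - (b : ℂ) * Complex.I) / 2) * (starRingEnd ℂ) om
      = (a : ℂ) * (om.re : ℂ) + (b : ℂ) * (om.im : ℂ) := by
  obtain ⟨x, y, rfl⟩ : ∃ x y : ℝ, om = (x : ℂ) + (y : ℂ) * Complex.I :=
    ⟨om.re, om.im, (Complex.re_add_im om).symm⟩
  have hre : ((x : ℂ) + (y : ℂ) * Complex.I).re = x := by simp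
  have him : ((x : ℂ) + (y : ℂ) * Complex.I).im = y := by simp
  rw [hre, him]
  simp only [map_div₀, map_sub, map_add, map_mul, Complex.conj_I, Complex.conj_ofReal]
  rw [show (starRingEnd ℂ) (2 : ℂ) = 2 by simp [Complex.ext_iff]]
  linear_combination (-(b : ℂ) * (y : ℂ)) * Complex.I_sq

end finalPrep

/-- linear independence in the superminimal case (core of Proposition 3.4). -/
theorem superminimal_linear_independence (n : ℕ) (hn : 5 ≤ n)
    (f : ℂ → Fin (n + 1) → ℝ) (ρ : ℂ → ℝ) (hf : IsConfMinImm f ρ)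
    (hiso : ∀ z : ℂ, pairC (Hopf f ρ z) (Hopf f ρ z) = 0)
    (hfull : ∀ V : Submodule ℝ (Fin (n + 1) → ℝ), (∀ z : ℂ, f z ∈ V) → V = ⊤) :
    (∀ (c : ℂ) (E : Fin (n + 1) → ℝ),
      (∀ (z : ℂ) (i : Fin (n + 1)),
        c * Hopf f ρ z i + (starRingEnd ℂ) c * (starRingEnd ℂ) (Hopf f ρ z i)
          + Eperp f ρ E z i = 0) →
      c = 0 ∧ E = 0) ∧
    Module.finrank ℝ
      ↥(Submodule.span ℝ
        (insert (HopfRe f ρ) (insert (HopfIm f ρ)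
          (Set.range (fun j : Fin (n + 1) => Eperp f ρ (Pi.single j 1)))))) = n + 3 := by
  
  have hpart1 : ∀ (c : ℂ) (E : Fin (n + 1) → ℝ),
      (∀ (z : ℂ) (i : Fin (n + 1)),
        c * Hopf f ρ z i + (starRingEnd ℂ) c * (starRingEnd ℂ) (Hopf f ρ z i)
          + Eperp f ρ E z i = 0) →
      c = 0 ∧ E = 0 := by
    intro c E hcE
    by_cases hc : c = 0
    · subst hc
      exact ⟨rfl, c_zero_E_zero (by omega) hf hfull hcE⟩
    · exact (c_ne_zero_contradiction (by omega) hf hfull hcE hc).elim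
  refine ⟨hpart1, ?_⟩
  classical
  set v : Fin (n + 3) → (ℂ → Fin (n + 1) → ℂ) :=
    Fin.cons (HopfRe f ρ) (Fin.cons (HopfIm f ρ)
      (fun j : Fin (n + 1) => Eperp f ρ (Pi.single j 1))) with hv
  have hrange : Set.range v = insert (HopfRe f ρ) (insert (HopfIm f ρ)
      (Set.range (fun j : Fin (n + 1) => Eperp f ρ (Pi.single j 1)))) := by
    rw [hv, Fin.range_cons, Fin.range_cons]
  have hli : LinearIndependent ℝ v := by
    rw [Fintype.linearIndependent_iff]
    intro gc hgc
    have heval : ∀ (z : ℂ) (i : Fin (n + 1)),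
        ((gc 0 : ℝ) : ℂ) * ((Hopf f ρ z i).re : ℂ)
          + ((gc (Fin.succ (0 : Fin (n + 2))) : ℝ) : ℂ) * ((Hopf f ρ z i).im : ℂ)
          + ∑ j : Fin (n + 1), ((gc (Fin.succ (Fin.succ j)) : ℝ) : ℂ)
              * Eperp f ρ (Pi.single j 1) z i = 0 := by
      intro z i
      have h1 := congrFun (congrFun hgc z) i
      rw [Finset.sum_apply, Finset.sum_apply] at h1
      simp only [Pi.smul_apply, Pi.zero_apply] at h1
      rw [hv] at h1
      rw [Fin.sum_univ_succ, Fin.sum_univ_succ] at h1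
      simp only [Fin.cons_zero, Fin.cons_succ, Complex.real_smul] at h1
      have h2 : (HopfRe f ρ z i : ℂ) = ((Hopf f ρ z i).re : ℂ) := rfl
      have h3 : (HopfIm f ρ z i : ℂ) = ((Hopf f ρ z i).im : ℂ) := rfl
      rw [h2, h3] at h1
      linear_combination h1
    have hmain : ∀ (z : ℂ) (i : Fin (n + 1)),
        (((gc 0 : ℝ) : ℂ) - ((gc (Fin.succ (0 : Fin (n + 2))) : ℝ) : ℂ) * Complex.I) / 2
            * Hopf f ρ z i
          + (starRingEnd ℂ) ((((gc 0 : ℝ) : ℂ)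
              - ((gc (Fin.succ (0 : Fin (n + 2))) : ℝ) : ℂ) * Complex.I) / 2)
            * (starRingEnd ℂ) (Hopf f ρ z i)
          + Eperp f ρ (fun j => gc (Fin.succ (Fin.succ j))) z i = 0 := by
      intro z i
      rw [cconj_comb (gc 0) (gc (Fin.succ (0 : Fin (n + 2)))) (Hopf f ρ z i)]
      rw [Eperp_comb f ρ (fun j => gc (Fin.succ (Fin.succ j))) z i]
      have := heval z i
      linear_combination this
    obtain ⟨hc0, hE0⟩ := hpart1 _ _ hmain
    have h3 : ((gc 0 : ℝ) : ℂ)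
        - ((gc (Fin.succ (0 : Fin (n + 2))) : ℝ) : ℂ) * Complex.I = 0 := by
      linear_combination 2 * hc0
    have ha0 : gc 0 = 0 := by
      have := congrArg Complex.re h3
      simpa using this
    have ha1 : gc (Fin.succ (0 : Fin (n + 2))) = 0 := by
      have := congrArg Complex.im h3
      simpa using this
    intro k
    refine Fin.cases ?_ (fun k1 => ?_) k
    · exact ha0
    · refine Fin.cases ?_ (fun j => ?_) k1
      · exact ha1
      · exact congrFun hE0 j
  rw [← hrange, finrank_span_eq_card hli, Fintype.card_fin]
end
end
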